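/- arXiv:2511.12499 — 5 statements merged into one kernel-verified Lean document; each statement's English description precedes it below -/
import Mathlib

section
/- For any nontrivial connected cograph G written as the join G = G_1 + G_2 + ... + G_t of its cocomponents with |V(G_1)| largest, the vertex connectivity of G equals n_G - n'_G, where n_G = |V(G)| and n'_G = |V(G_1)|. -/
open SimpleGraph

/-- A cograph is a finite simple graph with no induced path on 4 vertices. -/
def IsCograph {V : Type*} (G : SimpleGraph V) : Prop :=
  IsEmpty (SimpleGraph.pathGraph 4 ↪g G)

/-- The minimum degree of a graph. -/
noncomputable def minDeg {V : Type*} (G : SimpleGraph V) : ℕ :=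
  sInf {d | ∃ v, d = (G.neighborSet v).ncard}

/-- The maximum degree of a graph. -/
noncomputable def maxDeg {V : Type*} (G : SimpleGraph V) : ℕ :=
  sSup {d | ∃ v, d = (G.neighborSet v).ncard}

/-- Vertex connectivity: the least size of a vertex set whose removal
disconnects the graph or leaves a graph with at most one vertex. -/
noncomputable def vConn {V : Type*} (G : SimpleGraph V) : ℕ :=
  sInf {n | ∃ S : Set V, S.ncard = n ∧
    (¬ (G.induce (Sᶜ)).Connected ∨ (Sᶜ : Set V).ncard ≤ 1)}

/-- `k`-connectedness, with the convention that `K_1` is `1`-connected. -/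
def IsKConnected {V : Type*} (k : ℕ) (G : SimpleGraph V) : Prop :=
  k ≤ vConn G ∨ (k = 1 ∧ G.Connected)

/-- Edge connectivity: the least size of a set of edges whose removal
disconnects the graph. -/
noncomputable def eConn {V : Type*} (G : SimpleGraph V) : ℕ :=
  sInf {n | ∃ F : Set (Sym2 V), F ⊆ G.edgeSet ∧ F.ncard = n ∧
    ¬ (G.deleteEdges F).Connected}

/-- `k`-edge-connectedness, with the convention that `K_1` is `1`-edge-connected. -/
def IsKEdgeConnected {V : Type*} (k : ℕ) (G : SimpleGraph V) : Prop :=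
  k ≤ eConn G ∨ (k = 1 ∧ G.Connected)

/-- The order of a primary cocomponent of `G`, i.e. the largest order of a
connected component of the complement of `G`. -/
noncomputable def primaryOrder {V : Type*} (G : SimpleGraph V) : ℕ :=
  sSup {n | ∃ c : (Gᶜ).ConnectedComponent, n = c.supp.ncard}

/-- A connected graph is super edge-connected if every minimum edge-cut
consists of all edges incident with a single vertex of minimum degree. -/
def SuperEdgeConnected {V : Type*} (G : SimpleGraph V) : Prop :=
  G.Connected ∧ ∀ F : Set (Sym2 V), F ⊆ G.edgeSet → ¬ (G.deleteEdges F).Connected →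
    F.ncard = eConn G →
    ∃ v, F = G.incidenceSet v ∧ (G.neighborSet v).ncard = minDeg G


def complEmbed {V W : Type*} {A : SimpleGraph V} {B : SimpleGraph W} (f : A ↪g B) : Aᶜ ↪g Bᶜ :=
  ⟨f.toEmbedding, by
    intro a b
    simp only [compl_adj]
    exact and_congr f.injective.ne_iff (not_congr f.map_adj_iff)⟩

def p4SelfCompl : pathGraph 4 ≃g (pathGraph 4)ᶜ := by
  refine ⟨Equiv.mk ![1,3,0,2] ![2,0,3,1] (by decide) (by decide), ?_⟩
  intro a b
  fin_cases a <;> fin_cases b <;>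
    simp [pathGraph_adj, compl_adj, Fin.ext_iff] <;> decide

lemma IsCograph.compl {V : Type*} {G : SimpleGraph V} (h : IsCograph G) : IsCograph Gᶜ := by
  constructor
  intro e
  have h' : IsCograph Gᶜᶜ := by rw [compl_compl]; exact h
  exact h'.false ((complEmbed e).comp p4SelfCompl.toEmbedding)

lemma IsCograph.induce {V : Type*} {G : SimpleGraph V} (h : IsCograph G) (s : Set V) :
    IsCograph (G.induce s) := by
  constructor
  intro e
  exact h.false ((SimpleGraph.Embedding.induce s).comp e)

lemma compl_induce {V : Type*} (G : SimpleGraph V) (s : Set V) :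
    (G.induce s)ᶜ = Gᶜ.induce s := by
  ext x y
  simp only [compl_adj, comap_adj, Function.Embedding.coe_subtype, ne_eq,
    Subtype.ext_iff]

def p4Embed {V : Type*} {G : SimpleGraph V} {a b c d : V}
    (hab : G.Adj a b) (hbc : G.Adj b c) (hcd : G.Adj c d)
    (hac : ¬ G.Adj a c) (hbd : ¬ G.Adj b d) (had : ¬ G.Adj a d)
    (nac : a ≠ c) (nbd : b ≠ d) (nad : a ≠ d) : pathGraph 4 ↪g G := by
  refine ⟨⟨![a,b,c,d], ?_⟩, ?_⟩
  · intro x y hxy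
    have h1 := hab.ne
    have h2 := hbc.ne
    have h3 := hcd.ne
    fin_cases x <;> fin_cases y <;> simp_all
  · intro x y
    have h1 := hab.symm
    have h2 := hbc.symm
    have h3 := hcd.symm
    have h4 : ¬ G.Adj c a := fun h => hac h.symm
    have h5 : ¬ G.Adj d b := fun h => hbd h.symm
    have h6 : ¬ G.Adj d a := fun h => had h.symm
    have h7 : ¬ G.Adj a a := G.loopless.irrefl a
    have h8 : ¬ G.Adj b b := G.loopless.irrefl b
    have h9 : ¬ G.Adj c c := G.loopless.irrefl c
    have h10 : ¬ G.Adj d d := G.loopless.irrefl d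
    fin_cases x <;> fin_cases y <;>
      simp_all [pathGraph_adj] <;> assumption

lemma reach_induce_of_walk {V : Type*} {G : SimpleGraph V} {s : Set V} :
    ∀ {u v : V} (p : G.Walk u v), (∀ x ∈ p.support, x ∈ s) →
    ∀ (hu : u ∈ s) (hv : v ∈ s), (G.induce s).Reachable ⟨u, hu⟩ ⟨v, hv⟩ := by
  intro u v p
  induction p with
  | nil => intro _ hu hv; rfl
  | @cons u w v h q ih =>
    intro hs hu hv
    have hw : w ∈ s := hs w (by simp [Walk.support_cons])
    have h1 : (G.induce s).Adj ⟨u, hu⟩ ⟨w, hw⟩ := by simpa using h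
    exact h1.reachable.trans (ih (fun x hx => hs x (by simp [Walk.support_cons, hx])) hw hv)

lemma reach_of_mem_support {V : Type*} {G : SimpleGraph V} :
    ∀ {u v : V} (p : G.Walk u v) (t : V), t ∈ p.support → G.Reachable u t := by
  intro u v p
  induction p with
  | nil => intro t ht; simp at ht; subst ht; rfl
  | cons h q ih =>
    intro t ht
    rw [Walk.support_cons, List.mem_cons] at ht
    rcases ht with rfl | ht
    · rfl
    · exact h.reachable.trans (ih t ht)

lemma walk_frontier {α : Type*} {H : SimpleGraph α} (P : α → Prop) :
    ∀ {a b : α} (p : H.Walk a b), P a → ¬ P b →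
    ∃ x y, H.Adj x y ∧ P x ∧ ¬ P y ∧ H.Reachable y b := by
  intro a b p
  induction p with
  | nil => intro h1 h2; exact absurd h1 h2
  | @cons u w v h q ih =>
    intro h1 h2
    by_cases hw : P w
    · exact ih hw h2
    · exact ⟨u, w, h, h1, hw, ⟨q⟩⟩

lemma exists_nbr_reach {V : Type*} {G : SimpleGraph V} (v : V) :
    ∀ {u t : V} (p : G.Walk u t) (_ : t = v) (hu : u ∈ ({v}ᶜ : Set V)),
    ∃ z, ∃ hz : z ∈ ({v}ᶜ : Set V), G.Adj v z ∧
      (G.induce ({v}ᶜ : Set V)).Reachable ⟨u, hu⟩ ⟨z, hz⟩ := by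
  intro u t p
  induction p with
  | nil => intro ht hu; exact absurd ht (by simpa using hu)
  | @cons u w _ h q ih =>
    intro ht hu
    by_cases hwv : w = v
    · subst hwv
      exact ⟨u, hu, h.symm, by rfl⟩
      
    · have hw : w ∈ ({v}ᶜ : Set V) := by simpa using hwv
      obtain ⟨z, hz, hadj, hr⟩ := ih ht hw
      have h1 : (G.induce ({v}ᶜ : Set V)).Adj ⟨u, hu⟩ ⟨w, hw⟩ := by simpa using h
      exact ⟨z, hz, hadj, h1.reachable.trans hr⟩

lemma helper {V : Type*} (G : SimpleGraph V) (hG : IsCograph G)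
    (hc : G.Connected) (hcc : Gᶜ.Connected) (v : V)
    (hne : ∃ u : V, u ≠ v)
    (hd : ¬ (G.induce ({v}ᶜ : Set V)).Connected) : False := by
  set S : Set V := {v}ᶜ with hS
  set H := G.induce S with hH
  obtain ⟨u, hu⟩ := hne
  have huS : u ∈ S := by simp [hS, hu]
  have hSne : Nonempty S := ⟨⟨u, huS⟩⟩
  have hpre : ¬ ∀ a b : ↥S, H.Reachable a b := by
    intro h
    haveI := hSne
    exact hd ⟨h⟩
  push_neg at hpre
  obtain ⟨p, q, hpq⟩ := hpre
  -- a non-neighbor of v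
  have hex : ∃ w, Gᶜ.Adj v w := by
    obtain ⟨pw⟩ := hcc.preconnected v u
    cases pw with
    | nil => exact absurd rfl hu
    | cons h q => exact ⟨_, h⟩
  obtain ⟨u0, h0⟩ := hex
  have hu0S : u0 ∈ S := by simp [hS]; exact h0.ne'
  have h0n : ¬ G.Adj v u0 := h0.2
  set u0' : S := ⟨u0, hu0S⟩ with hu0'
  -- some vertex in a different H-component
  have hy : ∃ y : ↥S, ¬ H.Reachable u0' y := by
    by_contra hcon
    push_neg at hcon
    exact hpq ((hcon p).symm.trans (hcon q))
  obtain ⟨y, hy⟩ := hy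
  -- neighbors of v in each component
  obtain ⟨p1⟩ := hc.preconnected u0 v
  obtain ⟨x, hxS, hvx, hrx⟩ := exists_nbr_reach v p1 rfl hu0S
  obtain ⟨p2⟩ := hc.preconnected ↑y v
  obtain ⟨z, hzS, hvz, hrz⟩ := exists_nbr_reach v p2 rfl y.2
  -- frontier
  obtain ⟨p3⟩ := hrx.symm
  obtain ⟨A, B, hAB, hPA, hPB, hBu0⟩ :=
    walk_frontier (fun w : ↥S => G.Adj v ↑w) p3 hvx h0n
  have hBz : ¬ H.Reachable B ⟨z, hzS⟩ := fun h =>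
    hy (hBu0.symm.trans (h.trans hrz.symm))
  have hAz : ¬ H.Reachable A ⟨z, hzS⟩ := fun h =>
    hBz ((hAB.symm.reachable).trans h)
  have hBA : G.Adj ↑B ↑A := by
    have : G.Adj ↑A ↑B := by simpa using hAB
    exact this.symm
  have hAv : G.Adj ↑A v := hPA.symm
  have hnBv : ¬ G.Adj ↑B v := fun h => hPB h.symm
  have hnAz : ¬ G.Adj ↑A z := fun h =>
    hAz (SimpleGraph.Adj.reachable (by simpa [hH] using h : H.Adj A ⟨z, hzS⟩))
  have hnBz : ¬ G.Adj ↑B z := fun h =>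
    hBz (SimpleGraph.Adj.reachable (by simpa [hH] using h : H.Adj B ⟨z, hzS⟩))
  have nBv : (B : V) ≠ v := by
    intro h
    have hB : (B : V) ∈ ({v}ᶜ : Set V) := B.2
    rw [h] at hB
    exact hB rfl
  have nBz : (B : V) ≠ z := fun h => hBz (by rw [show B = ⟨z, hzS⟩ from Subtype.ext h])
  have nAz : (A : V) ≠ z := fun h => hAz (by rw [show A = ⟨z, hzS⟩ from Subtype.ext h])
  exact hG.false (p4Embed hBA hAv hvz hnBv hnAz hnBz nBv nAz nBz)

lemma exists_adj_of_connected {V : Type*} {G : SimpleGraph V} (h : G.Connected)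
    {v u : V} (hu : u ≠ v) : ∃ w, G.Adj v w := by
  obtain ⟨p⟩ := h.preconnected v u
  cases p with
  | nil => exact absurd rfl hu
  | cons h q => exact ⟨_, h⟩

lemma key : ∀ (n : ℕ) {V : Type*} [Fintype V] (G : SimpleGraph V),
    Fintype.card V ≤ n → IsCograph G → 2 ≤ Fintype.card V →
    G.Connected → Gᶜ.Connected → False := by
  intro n
  induction n with
  | zero => intro V _ G hn _ h2 _ _; omega
  | succ n ih =>
    intro V _ G hn hG h2 hc hcc
    classical
    by_cases h3 : 3 ≤ Fintype.card V
    · -- remove a vertex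
      have : Nonempty V := Fintype.card_pos_iff.mp (by omega)
      obtain ⟨v⟩ := this
      classical
      have hcardc : Fintype.card ↥({v}ᶜ : Set V) = Fintype.card V - 1 := by
        rw [Fintype.card_compl_set]
        simp
      have hne : ∃ u : V, u ≠ v := Fintype.exists_ne_of_one_lt_card (by omega) v
      by_cases hd : (G.induce ({v}ᶜ : Set V)).Connected
      · by_cases hd' : ((G.induce ({v}ᶜ : Set V))ᶜ).Connected
        · exact ih (G.induce ({v}ᶜ : Set V)) (by omega) (hG.induce _) (by omega) hd hd'
        · rw [compl_induce] at hd'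
          exact helper Gᶜ hG.compl hcc (by rw [compl_compl]; exact hc) v hne hd'
      · exact helper G hG hc hcc v hne hd
    · -- exactly two vertices
      have h2' : Fintype.card V = 2 := by omega
      rw [show Fintype.card V = Finset.univ.card from rfl, Finset.card_eq_two] at h2'
      obtain ⟨a, b, hab, huniv⟩ := h2'
      have hall : ∀ z : V, z = a ∨ z = b := by
        intro z
        have : z ∈ ({a, b} : Finset V) := huniv ▸ Finset.mem_univ z
        simpa using this
      obtain ⟨w, hw⟩ := exists_adj_of_connected hc (v := a) (u := b) hab.symm
      obtain ⟨w', hw'⟩ := exists_adj_of_connected hcc (v := a) (u := b) hab.symm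
      have hwb : w = b := (hall w).resolve_left (fun h => hw.ne' (h ▸ rfl))
      have hwb' : w' = b := (hall w').resolve_left (fun h => hw'.ne' (h ▸ rfl))
      subst hwb hwb'
      exact hw'.2 hw

/-- For a nontrivial connected cograph, the vertex connectivity equals the
order of the graph minus the order of a primary cocomponent. -/
theorem stmt1 {V : Type*} [Fintype V] (G : SimpleGraph V) (hG : IsCograph G)
    (hconn : G.Connected) (hnt : 2 ≤ Fintype.card V) :
    vConn G = Fintype.card V - primaryOrder G := by
  
  classical
  have hVne : Nonempty V := Fintype.card_pos_iff.mp (by omega)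
  have hCSne : {n | ∃ c : (Gᶜ).ConnectedComponent, n = c.supp.ncard}.Nonempty :=
    ⟨(Gᶜ.connectedComponentMk hVne.some).supp.ncard, ⟨_, rfl⟩⟩
  have hbdd : BddAbove {n | ∃ c : (Gᶜ).ConnectedComponent, n = c.supp.ncard} := by
    refine ⟨Fintype.card V, ?_⟩
    rintro k ⟨c, rfl⟩
    have h := Set.ncard_le_ncard (Set.subset_univ c.supp) Set.finite_univ
    simpa [Set.ncard_univ, Nat.card_eq_fintype_card] using h
  have hmem : primaryOrder G ∈ {n | ∃ c : (Gᶜ).ConnectedComponent, n = c.supp.ncard} :=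
    Nat.sSup_mem hCSne hbdd
  obtain ⟨c0, hc0⟩ := hmem
  have hmax : ∀ c : (Gᶜ).ConnectedComponent, c.supp.ncard ≤ primaryOrder G :=
    fun c => le_csSup hbdd ⟨c, rfl⟩
  have hm1 : 1 ≤ primaryOrder G := by
    rw [hc0]
    obtain ⟨w, hw⟩ := c0.exists_rep
    have hwmem : w ∈ c0.supp := by rw [ConnectedComponent.mem_supp_iff]; exact hw
    have h1 : c0.supp.Nonempty := ⟨w, hwmem⟩
    have := (Set.ncard_pos (Set.toFinite _)).mpr h1
    omega
  apply le_antisymm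
  · -- upper bound
    apply Nat.sInf_le
    refine ⟨c0.suppᶜ, ?_, ?_⟩
    · have h := Set.ncard_add_ncard_compl c0.supp
      rw [Nat.card_eq_fintype_card] at h
      omega
    · rw [compl_compl]
      by_cases hm2 : c0.supp.ncard ≤ 1
      · exact Or.inr hm2
      · left
        intro hcon
        have hcard : Fintype.card ↥c0.supp = c0.supp.ncard := by
          rw [← Nat.card_coe_set_eq, Nat.card_eq_fintype_card]
        have hccon : ((G.induce c0.supp)ᶜ).Connected := by
          rw [compl_induce]
          have hne : Nonempty ↥c0.supp := by
            rw [← Fintype.card_pos_iff, hcard]; omega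
          refine ⟨?_⟩
          intro x y
          have hre : Gᶜ.Reachable ↑x ↑y := by
            apply ConnectedComponent.exact
            rw [(ConnectedComponent.mem_supp_iff _ _).mp x.2,
              (ConnectedComponent.mem_supp_iff _ _).mp y.2]
          obtain ⟨pw⟩ := hre
          have hsup : ∀ t ∈ pw.support, t ∈ c0.supp := by
            intro t ht
            rw [ConnectedComponent.mem_supp_iff]
            rw [← (ConnectedComponent.mem_supp_iff _ _).mp x.2]
            exact (ConnectedComponent.sound (reach_of_mem_support pw t ht)).symm
          have := reach_induce_of_walk pw hsup x.2 y.2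
          simpa using this
        exact key (Fintype.card ↥c0.supp) (G.induce c0.supp) le_rfl (hG.induce _)
          (by omega) hcon hccon
  · -- lower bound
    apply le_csInf
    · exact ⟨Fintype.card V, Set.univ, by simp [Set.ncard_univ, Nat.card_eq_fintype_card],
        Or.inr (by simp)⟩
    · rintro k ⟨S, rfl, hS⟩
      have hsum := Set.ncard_add_ncard_compl S
      rw [Nat.card_eq_fintype_card] at hsum
      rcases hS with hS | hS
      · by_cases hSe : (Sᶜ : Set V) = ∅
        · rw [hSe, Set.ncard_empty] at hsum
          omega
        · obtain ⟨w, hw⟩ := Set.nonempty_iff_ne_empty.mpr hSe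
          have hTne : Nonempty ↥(Sᶜ : Set V) := ⟨⟨w, hw⟩⟩
          have hprec : ¬ ∀ a b : ↥(Sᶜ : Set V), (G.induce (Sᶜ : Set V)).Reachable a b :=
            fun h => hS ⟨h⟩
          push_neg at hprec
          obtain ⟨p, q, hpq⟩ := hprec
          have hadjc : ∀ a b : ↥(Sᶜ : Set V),
              (G.induce (Sᶜ : Set V)).Reachable p a →
              ¬ (G.induce (Sᶜ : Set V)).Reachable p b → Gᶜ.Adj ↑a ↑b := by
            intro a b ha hb
            have hne : (a : V) ≠ ↑b := by
              intro h
              exact hb (by rwa [show b = a from (Subtype.ext h).symm])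
            have hnadj : ¬ G.Adj ↑a ↑b := by
              intro h
              exact hb (ha.trans (SimpleGraph.Adj.reachable (by simpa using h)))
            exact ⟨hne, hnadj⟩
          have hcross : ∀ x y : ↥(Sᶜ : Set V), Gᶜ.Reachable ↑x ↑y := by
            intro x y
            by_cases hx : (G.induce (Sᶜ : Set V)).Reachable p x <;>
              by_cases hy : (G.induce (Sᶜ : Set V)).Reachable p y
            · exact ((hadjc x q hx hpq).reachable).trans ((hadjc y q hy hpq).symm.reachable)
            · exact (hadjc x y hx hy).reachable
            · exact ((hadjc y x hy hx).symm).reachable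
            · exact ((hadjc p x (by rfl) hx).symm.reachable).trans
                ((hadjc p y (by rfl) hy).reachable)
          have hsub : (Sᶜ : Set V) ⊆ (Gᶜ.connectedComponentMk w).supp := by
            intro t ht
            rw [ConnectedComponent.mem_supp_iff]
            exact ConnectedComponent.sound (hcross ⟨t, ht⟩ ⟨w, hw⟩)
          have hle : (Sᶜ : Set V).ncard ≤ primaryOrder G :=
            le_trans (Set.ncard_le_ncard hsub (Set.toFinite _)) (hmax _)
          omega
      · omega
end

section
/- Let G be a k-connected cograph with primary cocomponent G_1. If S_1 ⊆ V(G_1) with |S_1| ≥ min{k, |V(G_1)|} and S_2 ⊆ V(G) \ V(G_1) with |S_2| ≥ k, then the subgraph of G induced by S_1 ∪ S_2 is k-connected. -/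
open SimpleGraph

lemma adj_of_ne_comp {V : Type*} {G : SimpleGraph V} {u v : V}
    (h : Gᶜ.connectedComponentMk u ≠ Gᶜ.connectedComponentMk v) : G.Adj u v := by
  by_contra hadj
  have hne : u ≠ v := fun e => h (by rw [e])
  exact h (SimpleGraph.ConnectedComponent.sound
    (((G.compl_adj u v).mpr ⟨hne, hadj⟩).reachable))

/-- Taking at least `min k |V(G₁)|` vertices from a primary cocomponent `G₁`
and at least `k` vertices outside of it induces a `k`-connected subgraph of a
`k`-connected cograph. -/
theorem stmt4 {V : Type*} [Fintype V] (G : SimpleGraph V) (hG : IsCograph G)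
    (k : ℕ) (hk : IsKConnected k G)
    (c : (Gᶜ).ConnectedComponent) (hc : c.supp.ncard = primaryOrder G)
    (S₁ S₂ : Set V) (hS₁ : S₁ ⊆ c.supp) (hS₁card : min k c.supp.ncard ≤ S₁.ncard)
    (hS₂ : S₂ ⊆ (c.supp)ᶜ) (hS₂card : k ≤ S₂.ncard) :
    IsKConnected k (G.induce (S₁ ∪ S₂)) := by
  classical
  rcases Nat.eq_zero_or_pos k with hk0 | hkpos
  · exact Or.inl (hk0 ▸ Nat.zero_le _)
  left
  have hdisj : Disjoint S₁ S₂ := Set.disjoint_of_subset hS₁ hS₂ disjoint_compl_right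
  have hcne : c.supp.Nonempty := by obtain ⟨v, hv⟩ := c.exists_rep; exact ⟨v, hv⟩
  have hc1 : 1 ≤ c.supp.ncard := (Set.ncard_pos (Set.toFinite _)).mpr hcne
  have hS₁1 : 1 ≤ S₁.ncard := le_trans (le_min hkpos hc1) hS₁card
  have hUcard : (S₁ ∪ S₂).ncard = S₁.ncard + S₂.ncard :=
    Set.ncard_union_eq hdisj (Set.toFinite _) (Set.toFinite _)
  apply le_csInf
  · exact ⟨(Set.univ : Set ↥(S₁ ∪ S₂)).ncard, Set.univ, rfl, Or.inr (by simp)⟩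
  rintro n ⟨S, rfl, hcase⟩
  by_contra hlt
  push_neg at hlt
  set A : Set ↥(S₁ ∪ S₂) := {w | (w : V) ∈ S₁} with hA
  set B : Set ↥(S₁ ∪ S₂) := {w | (w : V) ∈ S₂} with hB
  have hAcard : A.ncard = S₁.ncard := by
    rw [← Set.ncard_image_of_injective A Subtype.val_injective]
    congr 1
    ext x
    constructor
    · rintro ⟨w, hw, rfl⟩; exact hw
    · intro hx; exact ⟨⟨x, Or.inl hx⟩, hx, rfl⟩
  have hBcard : B.ncard = S₂.ncard := by
    rw [← Set.ncard_image_of_injective B Subtype.val_injective]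
    congr 1
    ext x
    constructor
    · rintro ⟨w, hw, rfl⟩; exact hw
    · intro hx; exact ⟨⟨x, Or.inr hx⟩, hx, rfl⟩
  have hsum : S.ncard + Sᶜ.ncard = S₁.ncard + S₂.ncard := by
    rw [Set.ncard_add_ncard_compl S, Nat.card_coe_set_eq (S₁ ∪ S₂), hUcard]
  have h2 : 2 ≤ Sᶜ.ncard := by omega
  rcases hcase with hdisc | hle1
  swap
  · omega
  exfalso; apply hdisc
  have hne : Nonempty ↥(Sᶜ : Set ↥(S₁ ∪ S₂)) := by
    have h0 : (Sᶜ : Set ↥(S₁ ∪ S₂)).Nonempty := by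
      rw [← Set.ncard_pos (Set.toFinite _)]; omega
    exact h0.to_subtype
  rw [SimpleGraph.connected_iff]
  refine ⟨?_, hne⟩
  have key : ∀ a b : ↥(Sᶜ : Set ↥(S₁ ∪ S₂)),
      Gᶜ.connectedComponentMk (a.1 : V) ≠ Gᶜ.connectedComponentMk (b.1 : V) →
      ((G.induce (S₁ ∪ S₂)).induce Sᶜ).Adj a b := by
    intro a b h
    simp only [comap_adj, Function.Embedding.coe_subtype]
    exact adj_of_ne_comp h
  have key' : ∀ a b : ↥(Sᶜ : Set ↥(S₁ ∪ S₂)), (a.1 : V) ∈ S₁ → (b.1 : V) ∈ S₂ →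
      ((G.induce (S₁ ∪ S₂)).induce Sᶜ).Adj a b := by
    intro a b h1 h2
    apply key
    have e1 : Gᶜ.connectedComponentMk (a.1 : V) = c :=
      (SimpleGraph.ConnectedComponent.mem_supp_iff _ _).mp (hS₁ h1)
    intro e
    exact hS₂ h2 (by
      rw [SimpleGraph.ConnectedComponent.mem_supp_iff, ← e, e1])
  by_cases hA1 : ∃ a ∈ (Sᶜ : Set ↥(S₁ ∪ S₂)), (a : V) ∈ S₁
  · obtain ⟨a, haS, ha1⟩ := hA1
    have hBne : (B ∩ Sᶜ).Nonempty := by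
      rw [← Set.ncard_pos (Set.toFinite _)]
      by_contra h
      push_neg at h
      have hBS : B ⊆ S := by
        intro w hw
        by_contra hws
        have : w ∈ B ∩ Sᶜ := ⟨hw, hws⟩
        have := Set.ncard_pos (Set.toFinite (B ∩ Sᶜ)) |>.mpr ⟨w, this⟩
        omega
      have := Set.ncard_le_ncard hBS (Set.toFinite _)
      omega
    obtain ⟨b, hb2, hbS⟩ := hBne
    have hub : ∀ u : ↥(Sᶜ : Set ↥(S₁ ∪ S₂)),
        ((G.induce (S₁ ∪ S₂)).induce Sᶜ).Reachable u ⟨a, haS⟩ := by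
      intro u
      rcases u.1.2 with h1 | h2
      · exact ((key' u ⟨b, hbS⟩ h1 hb2).reachable).trans
          ((key' ⟨a, haS⟩ ⟨b, hbS⟩ ha1 hb2).reachable).symm
      · exact ((key' ⟨a, haS⟩ u ha1 h2).reachable).symm
    intro u v
    exact (hub u).trans (hub v).symm
  · push_neg at hA1
    have hAsub : A ⊆ S := by
      intro w hw
      by_contra hws
      exact hA1 w hws hw
    have hAS : A.ncard ≤ S.ncard := Set.ncard_le_ncard hAsub (Set.toFinite _)
    have hprim : ∀ c' : Gᶜ.ConnectedComponent, c'.supp.ncard ≤ c.supp.ncard := by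
      intro c'
      rw [hc]
      apply le_csSup
      · refine ⟨Fintype.card V, ?_⟩
        rintro m ⟨d, rfl⟩
        calc d.supp.ncard ≤ (Set.univ : Set V).ncard :=
              Set.ncard_le_ncard (Set.subset_univ _) (Set.toFinite _)
          _ = Fintype.card V := by simp [Set.ncard_univ, Nat.card_eq_fintype_card]
      · exact ⟨c', rfl⟩
    intro u v
    by_cases hcomp : Gᶜ.connectedComponentMk (u.1 : V) = Gᶜ.connectedComponentMk (v.1 : V)
    · set c' := Gᶜ.connectedComponentMk (u.1 : V) with hc'
      have hex : ∃ w ∈ (Sᶜ : Set ↥(S₁ ∪ S₂)), (w : V) ∉ c'.supp := by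
        by_contra h
        push_neg at h
        have hle : Sᶜ.ncard ≤ c'.supp.ncard := by
          rw [← Set.ncard_image_of_injective (Sᶜ : Set ↥(S₁ ∪ S₂)) Subtype.val_injective]
          apply Set.ncard_le_ncard _ (Set.toFinite _)
          rintro x ⟨w, hw, rfl⟩
          exact h w hw
        have := hprim c'
        omega
      obtain ⟨w, hwS, hwc⟩ := hex
      have hwne : Gᶜ.connectedComponentMk (w : V) ≠ c' := by
        intro e
        exact hwc ((SimpleGraph.ConnectedComponent.mem_supp_iff _ _).mpr e)
      have h1 : ((G.induce (S₁ ∪ S₂)).induce Sᶜ).Adj u ⟨w, hwS⟩ :=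
        key u ⟨w, hwS⟩ (fun e => hwne e.symm)
      have h2 : ((G.induce (S₁ ∪ S₂)).induce Sᶜ).Adj ⟨w, hwS⟩ v :=
        key ⟨w, hwS⟩ v (fun e => hwne (e.trans hcomp.symm))
      exact h1.reachable.trans h2.reachable
    · exact (key u v hcomp).reachable
end

section
/- Every connected cograph is maximally edge-connected, i.e., its edge connectivity equals its minimum degree. -/
open SimpleGraph

section Aux

open Finset

lemma p4emb {V : Type*} {G : SimpleGraph V} {a b c d : V}
    (hab : G.Adj a b) (hbc : G.Adj b c) (hcd : G.Adj c d)
    (hac : ¬G.Adj a c) (had : ¬G.Adj a d) (hbd : ¬G.Adj b d) :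
    Nonempty (SimpleGraph.pathGraph 4 ↪g G) := by
  have nab : a ≠ b := hab.ne
  have nbc : b ≠ c := hbc.ne
  have ncd : c ≠ d := hcd.ne
  have nac : a ≠ c := by rintro rfl; exact had hcd
  have nad : a ≠ d := by rintro rfl; exact hac hcd.symm
  have nbd : b ≠ d := by rintro rfl; exact had hab
  refine ⟨⟨![a,b,c,d], ?_⟩, ?_⟩
  · intro i j hij
    fin_cases i <;> fin_cases j <;> simp_all
  · intro i j
    fin_cases i <;> fin_cases j <;>
      simp_all [pathGraph_adj, G.adj_comm, SimpleGraph.irrefl] <;>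
        first | assumption | exact G.adj_symm (by assumption)

lemma common_nbr_of_walk {V : Type*} {G : SimpleGraph V}
    (hG : IsEmpty (SimpleGraph.pathGraph 4 ↪g G)) :
    ∀ {u v : V} (_ : G.Walk u v), u ≠ v → ¬ G.Adj u v →
      ∃ w, G.Adj u w ∧ G.Adj w v := by
  intro u v p
  induction p with
  | nil => intro h _; exact absurd rfl h
  | @cons u a v h q ih =>
    intro hne hadj
    by_cases hav : a = v
    · subst hav; exact absurd h hadj
    by_cases h2 : G.Adj a v
    · exact ⟨a, h, h2⟩
    obtain ⟨w, hw1, hw2⟩ := ih hav h2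
    by_cases h3 : G.Adj u w
    · exact ⟨w, h3, hw2⟩
    exact absurd (p4emb h hw1 hw2 h3 hadj h2) (not_nonempty_iff.mpr hG)

lemma count_key {V : Type*} [Fintype V] [DecidableEq V] {G : SimpleGraph V}
    [DecidableRel G.Adj]
    {δ : ℕ} (hδ : ∀ a : V, δ ≤ (G.neighborSet a).ncard)
    {F : Set (Sym2 V)}
    (A : Finset V) (hA : A.Nonempty)
    (hFsub : ∀ a ∈ A, ∀ b ∈ Aᶜ, G.Adj a b → s(a,b) ∈ F)
    (hnb : ∀ a ∈ A, ∃ b ∈ Aᶜ, G.Adj a b) :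
    δ ≤ F.ncard := by
  classical
  set P : Finset (V × V) := (A ×ˢ Aᶜ).filter (fun p => G.Adj p.1 p.2) with hP
  have hPF : P.card ≤ F.ncard := by
    rw [Set.ncard_eq_toFinset_card F (Set.toFinite F)]
    apply Finset.card_le_card_of_injOn (fun p => s(p.1, p.2))
    · intro p hp
      rw [hP, Finset.mem_coe, Finset.mem_filter, Finset.mem_product] at hp
      exact (Set.Finite.mem_toFinset _).mpr (hFsub p.1 hp.1.1 p.2 hp.1.2 hp.2)
    · intro p hp q hq hpq
      simp only [Finset.mem_coe, hP, Finset.mem_filter, Finset.mem_product] at hp hq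
      rw [Sym2.eq_iff] at hpq
      rcases hpq with ⟨h1, h2⟩ | ⟨h1, h2⟩
      · exact Prod.ext h1 h2
      · exfalso
        exact (Finset.mem_compl.mp hq.1.2) (h1 ▸ hp.1.1)
  have hsum : P.card = ∑ a ∈ A, (Aᶜ.filter (fun b => G.Adj a b)).card := by
    rw [Finset.card_eq_sum_card_fiberwise (f := Prod.fst) (t := A)
      (fun p hp => by rw [hP, Finset.mem_coe, Finset.mem_filter, Finset.mem_product] at hp; exact hp.1.1)]
    refine Finset.sum_congr rfl fun a ha => ?_
    apply Finset.card_bij (fun p _ => p.2)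
    · intro p hp
      rw [Finset.mem_filter, hP, Finset.mem_filter, Finset.mem_product] at hp
      rw [Finset.mem_filter]
      exact ⟨hp.1.1.2, hp.2 ▸ hp.1.2⟩
    · intro p hp q hq hpq
      rw [Finset.mem_filter] at hp hq
      exact Prod.ext (hp.2.trans hq.2.symm) hpq
    · intro b hb
      rw [Finset.mem_filter] at hb
      refine ⟨(a, b), ?_, rfl⟩
      rw [Finset.mem_filter, hP, Finset.mem_filter, Finset.mem_product]
      exact ⟨⟨⟨ha, hb.1⟩, hb.2⟩, rfl⟩
  rcases le_or_gt A.card δ with hcard | hcard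
  · -- each a ∈ A has ≥ δ + 1 - A.card neighbors in Aᶜ
    have hbound : ∀ a ∈ A, δ + 1 - A.card ≤ (Aᶜ.filter (fun b => G.Adj a b)).card := by
      intro a ha
      have hsplit : (Finset.univ.filter (G.Adj a)).card
          = (A.filter (fun b => G.Adj a b)).card + (Aᶜ.filter (fun b => G.Adj a b)).card := by
        rw [← Finset.card_union_of_disjoint
          (Finset.disjoint_filter_filter (disjoint_compl_right)),
          ← Finset.filter_union, Finset.union_compl]
      have hinA : (A.filter (fun b => G.Adj a b)).card ≤ A.card - 1 := by
        have : A.filter (fun b => G.Adj a b) ⊆ A.erase a := by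
          intro b hb
          rw [Finset.mem_filter] at hb
          exact Finset.mem_erase.mpr ⟨fun e => G.irrefl (e ▸ hb.2), hb.1⟩
        calc _ ≤ (A.erase a).card := Finset.card_le_card this
          _ = A.card - 1 := Finset.card_erase_of_mem ha
      have := hδ a
      have hcardeq : (G.neighborSet a).ncard = (Finset.univ.filter (G.Adj a)).card := by
        rw [← Set.ncard_coe_finset]
        congr 1
        ext b
        simp [SimpleGraph.mem_neighborSet]
      have hA1 : 1 ≤ A.card := Finset.card_pos.mpr ⟨a, ha⟩
      omega
    have := Finset.card_nsmul_le_sum A _ _ hbound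
    rw [smul_eq_mul] at this
    have h2 : δ ≤ A.card * (δ + 1 - A.card) := by
      have hA1 : 1 ≤ A.card := Finset.card_pos.mpr hA
      have h3 : δ + 1 - A.card = (δ - A.card) + 1 := by omega
      rw [h3, Nat.mul_add, Nat.mul_one]
      have : δ - A.card ≤ A.card * (δ - A.card) := Nat.le_mul_of_pos_left _ hA1
      omega
    omega
  · have hbound : ∀ a ∈ A, 1 ≤ (Aᶜ.filter (fun b => G.Adj a b)).card := by
      intro a ha
      obtain ⟨b, hb, hab⟩ := hnb a ha
      exact Finset.card_pos.mpr ⟨b, Finset.mem_filter.mpr ⟨hb, hab⟩⟩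
    have := Finset.card_nsmul_le_sum A _ _ hbound
    rw [smul_eq_mul, Nat.mul_one] at this
    omega

lemma cut_bound {V : Type*} [Fintype V] (G : SimpleGraph V)
    (hcn : ∀ u v : V, u ≠ v → ¬ G.Adj u v → ∃ w, G.Adj u w ∧ G.Adj w v)
    (F : Set (Sym2 V)) (hd : ¬ (G.deleteEdges F).Connected)
    (hne : Nonempty V) : minDeg G ≤ F.ncard := by
  classical
  haveI := hne
  have hpre : ¬ (G.deleteEdges F).Preconnected := fun hp => hd ⟨hp⟩
  simp only [SimpleGraph.Preconnected, not_forall] at hpre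
  obtain ⟨x, y, hxy⟩ := hpre
  set X : Finset V := Finset.univ.filter (fun z => (G.deleteEdges F).Reachable x z) with hX
  have hxX : x ∈ X := by
    rw [hX, Finset.mem_filter]
    exact ⟨Finset.mem_univ _, SimpleGraph.Reachable.refl x⟩
  have hyX : y ∈ Xᶜ := by
    rw [Finset.mem_compl, hX, Finset.mem_filter]
    rintro ⟨-, h⟩
    exact hxy h
  have hδ : ∀ a : V, minDeg G ≤ (G.neighborSet a).ncard := fun a => Nat.sInf_le ⟨a, rfl⟩
  have hcross : ∀ a b : V, a ∈ X → b ∈ Xᶜ → G.Adj a b → s(a,b) ∈ F := by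
    intro a b ha hb hab
    by_contra hF
    have hadj : (G.deleteEdges F).Adj a b := SimpleGraph.deleteEdges_adj.mpr ⟨hab, hF⟩
    apply Finset.mem_compl.mp hb
    rw [hX, Finset.mem_filter]
    rw [hX, Finset.mem_filter] at ha
    exact ⟨Finset.mem_univ _, ha.2.trans hadj.reachable⟩
  by_cases h1 : ∀ a ∈ X, ∃ b ∈ Xᶜ, G.Adj a b
  · exact count_key hδ X ⟨x, hxX⟩ (fun a ha b hb => hcross a b ha hb) h1
  by_cases h2 : ∀ a ∈ Xᶜ, ∃ b ∈ Xᶜᶜ, G.Adj a b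
  · refine count_key hδ Xᶜ ⟨y, hyX⟩ ?_ h2
    intro a ha b hb hab
    rw [compl_compl] at hb
    have := hcross b a hb ha hab.symm
    rwa [Sym2.eq_swap]
  push_neg at h1 h2
  obtain ⟨a, ha, h1⟩ := h1
  obtain ⟨b, hb, h2⟩ := h2
  simp only [compl_compl] at h2
  have hne' : a ≠ b := fun e => (Finset.mem_compl.mp hb) (e ▸ ha)
  have hnadj : ¬ G.Adj a b := fun h => h1 b hb h
  obtain ⟨w, hw1, hw2⟩ := hcn a b hne' hnadj
  by_cases hwX : w ∈ X
  · exact (h2 w hwX hw2.symm).elim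
  · exact (h1 w (Finset.mem_compl.mpr hwX) hw1).elim

end Aux

/-- Every connected cograph is maximally edge-connected. -/
theorem stmt13 {V : Type*} [Fintype V] (G : SimpleGraph V) (hG : IsCograph G)
    (hconn : G.Connected) :
    eConn G = minDeg G := by
  classical
  have hne : Nonempty V := hconn.nonempty
  have hcn : ∀ u v : V, u ≠ v → ¬ G.Adj u v → ∃ w, G.Adj u w ∧ G.Adj w v := by
    intro u v huv hadj
    obtain ⟨p⟩ := hconn.preconnected u v
    exact common_nbr_of_walk hG p huv hadj
  rcases subsingleton_or_nontrivial V with hsub | hnt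
  · -- single vertex
    obtain ⟨v⟩ := hne
    have hmin : minDeg G = 0 := by
      have : (G.neighborSet v).ncard = 0 := by
        rw [Set.ncard_eq_zero]
        ext w
        simp only [SimpleGraph.mem_neighborSet, Set.mem_empty_iff_false, iff_false]
        intro h
        exact G.irrefl ((Subsingleton.elim v w) ▸ h)
      exact Nat.eq_zero_of_le_zero (Nat.sInf_le ⟨v, this.symm⟩)
    have hecut : {n | ∃ F : Set (Sym2 V), F ⊆ G.edgeSet ∧ F.ncard = n ∧
        ¬ (G.deleteEdges F).Connected} = ∅ := by
      haveI : Nonempty V := ⟨v⟩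
      ext n
      simp only [Set.mem_setOf_eq, Set.mem_empty_iff_false, iff_false]
      rintro ⟨F, -, -, hd⟩
      exact hd ⟨fun a b => (Subsingleton.elim a b) ▸ SimpleGraph.Reachable.refl a⟩
    rw [eConn, hecut, hmin, Nat.sInf_empty]
  · -- at least two vertices
    obtain ⟨v, hv⟩ := Nat.sInf_mem (⟨(G.neighborSet (Classical.arbitrary V)).ncard,
      ⟨Classical.arbitrary V, rfl⟩⟩ : Set.Nonempty {d | ∃ v, d = (G.neighborSet v).ncard})
    have hmem : minDeg G ∈ {n | ∃ F : Set (Sym2 V), F ⊆ G.edgeSet ∧ F.ncard = n ∧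
        ¬ (G.deleteEdges F).Connected} := by
      refine ⟨G.incidenceSet v, G.incidenceSet_subset v, ?_, ?_⟩
      · rw [← Nat.card_coe_set_eq, Nat.card_congr (G.incidenceSetEquivNeighborSet v),
          Nat.card_coe_set_eq]
        exact hv.symm
      · intro hc
        obtain ⟨u, hu⟩ := exists_ne v
        obtain ⟨p⟩ := hc.preconnected v u
        cases p with
        | nil => exact hu rfl
        | cons h q =>
          rw [SimpleGraph.deleteEdges_adj] at h
          exact h.2 ((G.mem_incidenceSet v _).mpr h.1)
    have h1 : eConn G ≤ minDeg G := Nat.sInf_le hmem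
    have h2 : minDeg G ≤ eConn G := by
      obtain ⟨F, hFE, hFcard, hFd⟩ := Nat.sInf_mem (⟨minDeg G, hmem⟩ :
        Set.Nonempty {n | ∃ F : Set (Sym2 V), F ⊆ G.edgeSet ∧ F.ncard = n ∧
          ¬ (G.deleteEdges F).Connected})
      exact le_of_le_of_eq (cut_bound G hcn F hFd hne) hFcard
    omega
end

section
/- Every 2-connected cograph not isomorphic to the 4-cycle C_4 is super edge-connected. -/
open SimpleGraph

section SuperEdgeHelpers

attribute [local instance] Classical.propDecidable

open Finset in
private lemma sec_sum_swap_adj {V : Type*} (G : SimpleGraph V) (A B : Finset V) :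
    ∑ a ∈ A, (B.filter (G.Adj a)).card = ∑ b ∈ B, (A.filter (G.Adj b)).card := by
  simp only [Finset.card_filter]
  rw [Finset.sum_comm]
  refine Finset.sum_congr rfl fun b _ => Finset.sum_congr rfl fun a _ => ?_
  simp [G.adj_comm]

open Finset in
private noncomputable def sec_p4_embed {V : Type*} (G : SimpleGraph V) {a b c d : V}
    (hab : G.Adj a b) (hbc : G.Adj b c) (hcd : G.Adj c d)
    (hac : ¬ G.Adj a c) (had : ¬ G.Adj a d) (hbd : ¬ G.Adj b d)
    (nac : a ≠ c) (nad : a ≠ d) (nbd : b ≠ d) :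
    SimpleGraph.pathGraph 4 ↪g G := by
  have nab : a ≠ b := hab.ne
  have nbc : b ≠ c := hbc.ne
  have ncd : c ≠ d := hcd.ne
  have hba := hab.symm; have hcb := hbc.symm; have hdc := hcd.symm
  have hca : ¬ G.Adj c a := fun h => hac h.symm
  have hda : ¬ G.Adj d a := fun h => had h.symm
  have hdb : ¬ G.Adj d b := fun h => hbd h.symm
  refine ⟨⟨![a,b,c,d], ?_⟩, ?_⟩
  · intro i j hij
    fin_cases i <;> fin_cases j <;> simp_all [Matrix.cons_val_zero, Matrix.cons_val_one]
  · intro i j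
    change G.Adj (![a,b,c,d] i) (![a,b,c,d] j) ↔ _
    fin_cases i <;> fin_cases j <;>
      simp [SimpleGraph.pathGraph_adj, hab, hbc, hcd, hac, had, hbd, hba, hcb, hdc, hca,
        hda, hdb, G.irrefl] <;> decide

private lemma sec_common_nbr {V : Type*} {G : SimpleGraph V} (hG : IsCograph G) {u v : V}
    (p : G.Walk u v) : u ≠ v → ¬ G.Adj u v → ∃ w, G.Adj u w ∧ G.Adj w v := by
  induction p with
  | nil => exact fun h _ => absurd rfl h
  | @cons u x v h q ih =>
    intro huv hadj
    by_cases hxv : x = v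
    · exact absurd (hxv ▸ h) hadj
    by_cases haxv : G.Adj x v
    · exact ⟨x, h, haxv⟩
    obtain ⟨w, hxw, hwv⟩ := ih hxv haxv
    by_cases huw : G.Adj u w
    · exact ⟨w, huw, hwv⟩
    · have nuw : u ≠ w := fun e => hadj (e ▸ hwv)
      exact (hG.elim (sec_p4_embed G h hxw hwv huw hadj haxv nuw huv hxv))

open Finset in
private lemma sec_deg_split {V : Type*} [Fintype V] {G : SimpleGraph V} (A B : Finset V)
    (hU : A ∪ B = Finset.univ) (hd : Disjoint A B) (x : V) :
    (G.neighborFinset x).card = (A.filter (G.Adj x)).card + (B.filter (G.Adj x)).card := by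
  rw [SimpleGraph.neighborFinset_eq_filter, ← hU, Finset.filter_union]
  exact Finset.card_union_of_disjoint (Finset.disjoint_filter_filter hd)

open Finset in
private lemma sec_side_struct {V : Type*} [Fintype V] {G : SimpleGraph V} (N : ℕ)
    (A B : Finset V) (hd : Disjoint A B) (hU : A ∪ B = Finset.univ)
    (hB2 : 2 ≤ B.card) (hN : ∀ x, N ≤ (G.neighborFinset x).card)
    (hsum : ∑ b ∈ B, (A.filter (G.Adj b)).card ≤ N)
    (hone : ∀ b ∈ B, 1 ≤ (A.filter (G.Adj b)).card) :
    B.card = N ∧ (∀ b ∈ B, (A.filter (G.Adj b)).card = 1) ∧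
      (∀ b ∈ B, ∀ b' ∈ B, b ≠ b' → G.Adj b b') := by
  have hβsum : B.card ≤ ∑ b ∈ B, (A.filter (G.Adj b)).card := by
    calc B.card = ∑ _b ∈ B, 1 := by simp
    _ ≤ _ := Finset.sum_le_sum hone
  have hdin : ∀ b ∈ B, (B.filter (G.Adj b)).card ≤ B.card - 1 := by
    intro b hb
    have hsub : B.filter (G.Adj b) ⊆ B.erase b := by
      intro x hx
      rw [Finset.mem_filter] at hx
      exact Finset.mem_erase.mpr ⟨fun e => G.irrefl (e ▸ hx.2), hx.1⟩
    calc (B.filter (G.Adj b)).card ≤ (B.erase b).card := Finset.card_le_card hsub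
    _ = B.card - 1 := Finset.card_erase_of_mem hb
  have hβN : B.card ≤ N := le_trans hβsum hsum
  rcases lt_or_eq_of_le hβN with hlt | heq
  · exfalso
    have h1 : ∀ b ∈ B, N + 1 ≤ (A.filter (G.Adj b)).card + B.card := by
      intro b hb
      have h2 := hN b
      rw [sec_deg_split A B hU hd b] at h2
      have := hdin b hb
      omega
    have h2 : B.card * (N + 1) ≤ (∑ b ∈ B, (A.filter (G.Adj b)).card) + B.card * B.card := by
      calc B.card * (N+1) = ∑ _b ∈ B, (N+1) := by rw [Finset.sum_const, smul_eq_mul]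
      _ ≤ ∑ b ∈ B, ((A.filter (G.Adj b)).card + B.card) := Finset.sum_le_sum h1
      _ = _ := by rw [Finset.sum_add_distrib, Finset.sum_const, smul_eq_mul]
    have h3 : B.card * (N+1) ≤ N + B.card * B.card := by omega
    have hβ2 := hB2
    zify at h3 hlt hβ2
    nlinarith [mul_pos (by linarith : (0:ℤ) < (B.card:ℤ) - 1)
      (by linarith : (0:ℤ) < (N:ℤ) - B.card)]
  · refine ⟨heq, ?_, ?_⟩
    · intro b hb
      by_contra hne
      have h2 : 1 < (A.filter (G.Adj b)).card := by
        have := hone b hb; omega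
      have := Finset.sum_lt_sum hone ⟨b, hb, h2⟩
      simp only [Finset.sum_const, smul_eq_mul, mul_one] at this
      omega
    · intro b hb b' hb' hne
      have hdeg := hN b
      rw [sec_deg_split A B hU hd b] at hdeg
      have h1 : (A.filter (G.Adj b)).card ≤ 1 := by
        by_contra hgt
        push_neg at hgt
        have := Finset.sum_lt_sum hone ⟨b, hb, hgt⟩
        simp only [Finset.sum_const, smul_eq_mul, mul_one] at this
        omega
      have h2 := hdin b hb
      have hsub : B.filter (G.Adj b) ⊆ B.erase b := by
        intro x hx
        rw [Finset.mem_filter] at hx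
        exact Finset.mem_erase.mpr ⟨fun e => G.irrefl (e ▸ hx.2), hx.1⟩
      have heqset : B.filter (G.Adj b) = B.erase b :=
        Finset.eq_of_subset_of_card_le hsub (by rw [Finset.card_erase_of_mem hb]; omega)
      have hb'' : b' ∈ B.erase b := Finset.mem_erase.mpr ⟨hne.symm, hb'⟩
      rw [← heqset, Finset.mem_filter] at hb''
      exact hb''.2

open Finset in
private lemma sec_case1 {V : Type*} [Fintype V] {G : SimpleGraph V} (hG : IsCograph G)
    (hcn : ∀ u v : V, u ≠ v → ¬ G.Adj u v → ∃ w, G.Adj u w ∧ G.Adj w v)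
    (h2 : ∀ w : V, (G.induce ({w}ᶜ : Set V)).Connected)
    (N : ℕ) (hN : ∀ x, N ≤ (G.neighborFinset x).card)
    (A B : Finset V) (hd : Disjoint A B) (hU : A ∪ B = Finset.univ)
    (hA2 : 2 ≤ A.card) (hB2 : 2 ≤ B.card)
    (hsum : ∑ b ∈ B, (A.filter (G.Adj b)).card ≤ N)
    (a0 : V) (ha0 : a0 ∈ A) (hint : ∀ b ∈ B, ¬ G.Adj a0 b) : False := by
  have hABne : ∀ x ∈ A, ∀ y ∈ B, x ≠ y := by
    intro x hx y hy e
    exact (Finset.disjoint_left.mp hd hx) (e ▸ hy)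
  have hmemAB : ∀ x : V, x ∈ A ∨ x ∈ B := by
    intro x
    have : x ∈ A ∪ B := hU ▸ Finset.mem_univ x
    exact Finset.mem_union.mp this
  have hone : ∀ b ∈ B, 1 ≤ (A.filter (G.Adj b)).card := by
    intro b hb
    obtain ⟨w, hbw, hwa0⟩ := hcn b a0 (hABne a0 ha0 b hb).symm
      (fun h => hint b hb h.symm)
    have hwA : w ∈ A := by
      rcases hmemAB w with h | h
      · exact h
      · exact absurd hwa0.symm (hint w h)
    have : w ∈ A.filter (G.Adj b) := Finset.mem_filter.mpr ⟨hwA, hbw⟩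
    exact Finset.card_pos.mpr ⟨w, this⟩
  obtain ⟨hcard, hall, hclique⟩ := sec_side_struct N A B hd hU hB2 hN hsum hone
  have hf : ∀ b ∈ B, ∃ w, A.filter (G.Adj b) = {w} :=
    fun b hb => Finset.card_eq_one.mp (hall b hb)
  choose! f hfspec using hf
  have hfA : ∀ b ∈ B, f b ∈ A ∧ G.Adj b (f b) := by
    intro b hb
    have : f b ∈ A.filter (G.Adj b) := by rw [hfspec b hb]; exact Finset.mem_singleton_self _
    exact Finset.mem_filter.mp this
  have hfuniq : ∀ b ∈ B, ∀ x ∈ A, G.Adj b x → x = f b := by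
    intro b hb x hx hadj
    have : x ∈ A.filter (G.Adj b) := Finset.mem_filter.mpr ⟨hx, hadj⟩
    rw [hfspec b hb] at this
    exact Finset.mem_singleton.mp this
  have ha0fb : ∀ b ∈ B, G.Adj a0 (f b) := by
    intro b hb
    obtain ⟨w, ha0w, hwb⟩ := hcn a0 b (hABne a0 ha0 b hb) (hint b hb)
    have hwA : w ∈ A := by
      rcases hmemAB w with h | h
      · exact h
      · exact absurd ha0w (hint w h)
    rwa [hfuniq b hb w hwA hwb.symm] at ha0w
  by_cases hconst : ∀ b ∈ B, ∀ b' ∈ B, f b = f b'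
  · obtain ⟨b0, hb0⟩ : B.Nonempty := Finset.card_pos.mp (by omega)
    set w0 := f b0 with hw0
    have hw0A : w0 ∈ A := (hfA b0 hb0).1
    have hkey : ∀ x ∈ B, ∀ y : V, y ≠ w0 → G.Adj x y → y ∈ B := by
      intro x hx y hy hadj
      rcases hmemAB y with h | h
      · exact absurd ((hfuniq x hx y h hadj).trans (hconst x hx b0 hb0)) hy
      · exact h
    obtain ⟨a1, ha1⟩ : (A.erase w0).Nonempty := by
      rw [← Finset.card_pos, Finset.card_erase_of_mem hw0A]; omega
    have ha1A : a1 ∈ A := Finset.mem_of_mem_erase ha1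
    have ha1w0 : a1 ≠ w0 := Finset.ne_of_mem_erase ha1
    have hb0w0 : b0 ≠ w0 := (hABne w0 hw0A b0 hb0).symm
    have hreach := (h2 w0).preconnected ⟨b0, by simp [hb0w0]⟩ ⟨a1, by simp [ha1w0]⟩
    obtain ⟨p⟩ := hreach
    have hBclosed : ∀ (x y : ({w0}ᶜ : Set V)), (G.induce ({w0}ᶜ : Set V)).Walk x y →
        (x : V) ∈ B → (y : V) ∈ B := by
      intro x y p
      induction p with
      | nil => exact id
      | @cons u z v h q ih =>
        intro hu
        have hadj : G.Adj (u : V) (z : V) := h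
        have hz : (z : V) ∈ B := hkey u hu z (by exact z.2) hadj
        exact ih hz
    have := hBclosed _ _ p hb0
    exact (Finset.disjoint_left.mp hd ha1A) this
  · push_neg at hconst
    obtain ⟨b1, hb1, b2, hb2, hfne⟩ := hconst
    have hb12 : b1 ≠ b2 := fun e => hfne (e ▸ rfl)
    have e1 : G.Adj a0 (f b1) := ha0fb b1 hb1
    have e2 : G.Adj (f b1) b1 := (hfA b1 hb1).2.symm
    have e3 : G.Adj b1 b2 := hclique b1 hb1 b2 hb2 hb12
    have n1 : ¬ G.Adj a0 b1 := hint b1 hb1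
    have n2 : ¬ G.Adj a0 b2 := hint b2 hb2
    have n3 : ¬ G.Adj (f b1) b2 := by
      intro h
      exact hfne (hfuniq b2 hb2 (f b1) (hfA b1 hb1).1 h.symm)
    exact hG.elim (sec_p4_embed G e1 e2 e3 n1 n2 n3 (hABne a0 ha0 b1 hb1)
      (hABne a0 ha0 b2 hb2) (hABne (f b1) (hfA b1 hb1).1 b2 hb2))

open Finset in
private noncomputable def sec_c4_iso {V : Type*} (G : SimpleGraph V) {a1 a2 b1 b2 : V}
    (huniv : ∀ x : V, x = a1 ∨ x = a2 ∨ x = b1 ∨ x = b2)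
    (n12 : a1 ≠ a2) (nb12 : b1 ≠ b2) (n11 : a1 ≠ b1) (n1b2 : a1 ≠ b2)
    (n21 : a2 ≠ b1) (n22 : a2 ≠ b2)
    (eaa : G.Adj a1 a2) (ebb : G.Adj b1 b2) (e11 : G.Adj a1 b1) (e22 : G.Adj a2 b2)
    (m12 : ¬ G.Adj a1 b2) (m21 : ¬ G.Adj a2 b1) :
    G ≃g (SimpleGraph.cycleGraph 4) := by
  have heaa := eaa.symm; have hebb := ebb.symm; have he11 := e11.symm; have he22 := e22.symm
  have hm12 : ¬ G.Adj b2 a1 := fun h => m12 h.symm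
  have hm21 : ¬ G.Adj b1 a2 := fun h => m21 h.symm
  have hbij : Function.Bijective (![a1, a2, b2, b1]) := by
    constructor
    · intro i j hij
      fin_cases i <;> fin_cases j <;> simp_all
    · intro x
      rcases huniv x with h | h | h | h
      · exact ⟨0, h.symm⟩
      · exact ⟨1, h.symm⟩
      · exact ⟨3, h.symm⟩
      · exact ⟨2, h.symm⟩
  refine SimpleGraph.Iso.symm ⟨Equiv.ofBijective _ hbij, ?_⟩
  intro i j
  simp only [Equiv.ofBijective_apply]
  fin_cases i <;> fin_cases j <;>
    simp [eaa, ebb, e11, e22, m12, m21, heaa, hebb, he11, he22, hm12, hm21, G.irrefl,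
      SimpleGraph.cycleGraph_adj] <;> decide

open Finset in
private lemma sec_case3 {V : Type*} [Fintype V] {G : SimpleGraph V} (hG : IsCograph G)
    (N : ℕ) (hN : ∀ x, N ≤ (G.neighborFinset x).card)
    (A B : Finset V) (hd : Disjoint A B) (hU : A ∪ B = Finset.univ)
    (hA2 : 2 ≤ A.card) (hB2 : 2 ≤ B.card)
    (hsumA : ∑ a ∈ A, (B.filter (G.Adj a)).card ≤ N)
    (hsumB : ∑ b ∈ B, (A.filter (G.Adj b)).card ≤ N)
    (honeA : ∀ a ∈ A, 1 ≤ (B.filter (G.Adj a)).card)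
    (honeB : ∀ b ∈ B, 1 ≤ (A.filter (G.Adj b)).card) :
    Nonempty (G ≃g (SimpleGraph.cycleGraph 4)) := by
  have hABne : ∀ x ∈ A, ∀ y ∈ B, x ≠ y := by
    intro x hx y hy e
    exact (Finset.disjoint_left.mp hd hx) (e ▸ hy)
  obtain ⟨hcardB, hallB, hcliqueB⟩ := sec_side_struct N A B hd hU hB2 hN hsumB honeB
  obtain ⟨hcardA, hallA, hcliqueA⟩ := sec_side_struct N B A hd.symm
    (by rw [Finset.union_comm]; exact hU) hA2 hN hsumA honeA
  have hfex : ∀ a ∈ A, ∃ w, B.filter (G.Adj a) = {w} :=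
    fun a ha => Finset.card_eq_one.mp (hallA a ha)
  choose! f hfspec using hfex
  have hfB : ∀ a ∈ A, f a ∈ B ∧ G.Adj a (f a) := by
    intro a ha
    have : f a ∈ B.filter (G.Adj a) := by rw [hfspec a ha]; exact Finset.mem_singleton_self _
    exact Finset.mem_filter.mp this
  have hfuniq : ∀ a ∈ A, ∀ y ∈ B, G.Adj a y → y = f a := by
    intro a ha y hy hadj
    have : y ∈ B.filter (G.Adj a) := Finset.mem_filter.mpr ⟨hy, hadj⟩
    rw [hfspec a ha] at this
    exact Finset.mem_singleton.mp this
  have hfinj : ∀ a ∈ A, ∀ a' ∈ A, f a = f a' → a = a' := by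
    intro a ha a' ha' he
    have h1 : a ∈ A.filter (G.Adj (f a)) := Finset.mem_filter.mpr ⟨ha, (hfB a ha).2.symm⟩
    have h2 : a' ∈ A.filter (G.Adj (f a)) := Finset.mem_filter.mpr ⟨ha', he ▸ (hfB a' ha').2.symm⟩
    have hcard := hallB (f a) (hfB a ha).1
    obtain ⟨w, hw⟩ := Finset.card_eq_one.mp hcard
    rw [hw, Finset.mem_singleton] at h1 h2
    rw [h1, h2]
  by_cases h3 : 3 ≤ N
  · exfalso
    obtain ⟨a1, ha1, a2, ha2, ha12⟩ := Finset.one_lt_card.mp (by omega : 1 < A.card)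
    have hb2B := (hfB a2 ha2).1
    obtain ⟨b3, hb3⟩ : (B \ {f a2, f a1}).Nonempty := by
      rw [← Finset.card_pos]
      have h4 : ({f a2, f a1} : Finset V).card ≤ 2 :=
        (Finset.card_insert_le _ _).trans (by simp)
      have hge := Finset.le_card_sdiff ({f a2, f a1} : Finset V) B
      omega
    rw [Finset.mem_sdiff, Finset.mem_insert, Finset.mem_singleton] at hb3
    push_neg at hb3
    obtain ⟨hb3B, hb3n2, hb3n1⟩ := hb3
    have e1 : G.Adj a1 a2 := hcliqueA a1 ha1 a2 ha2 ha12
    have e2 : G.Adj a2 (f a2) := (hfB a2 ha2).2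
    have e3 : G.Adj (f a2) b3 := hcliqueB (f a2) hb2B b3 hb3B (fun e => hb3n2 e.symm)
    have n1 : ¬ G.Adj a1 (f a2) := by
      intro h
      exact ha12 (hfinj a1 ha1 a2 ha2 (hfuniq a1 ha1 (f a2) hb2B h).symm)
    have n2 : ¬ G.Adj a1 b3 := fun h => hb3n1 (hfuniq a1 ha1 b3 hb3B h)
    have n3 : ¬ G.Adj a2 b3 := fun h => hb3n2 (hfuniq a2 ha2 b3 hb3B h)
    exact hG.elim (sec_p4_embed G e1 e2 e3 n1 n2 n3 (hABne a1 ha1 (f a2) hb2B)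
      (hABne a1 ha1 b3 hb3B) (hABne a2 ha2 b3 hb3B))
  · have hN2 : N = 2 := by omega
    obtain ⟨a1, a2, ha12, hAeq⟩ := Finset.card_eq_two.mp (hcardA.trans hN2)
    have ha1 : a1 ∈ A := by rw [hAeq]; simp
    have ha2 : a2 ∈ A := by rw [hAeq]; simp
    set b1 := f a1 with hb1def
    set b2 := f a2 with hb2def
    have hb1B := (hfB a1 ha1).1
    have hb2B := (hfB a2 ha2).1
    have hb12 : b1 ≠ b2 := fun e => ha12 (hfinj a1 ha1 a2 ha2 e)
    have hBeq : B = {b1, b2} := by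
      refine (Finset.eq_of_subset_of_card_le ?_ ?_).symm
      · intro x hx
        rw [Finset.mem_insert, Finset.mem_singleton] at hx
        rcases hx with h | h
        · exact h ▸ hb1B
        · exact h ▸ hb2B
      · rw [hcardB, hN2, Finset.card_insert_of_notMem (by simpa using hb12),
          Finset.card_singleton]
    have huniv : ∀ x : V, x = a1 ∨ x = a2 ∨ x = b1 ∨ x = b2 := by
      intro x
      have : x ∈ A ∪ B := hU ▸ Finset.mem_univ x
      rw [Finset.mem_union, hAeq, hBeq, Finset.mem_insert, Finset.mem_singleton,
        Finset.mem_insert, Finset.mem_singleton] at this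
      tauto
    have eaa : G.Adj a1 a2 := hcliqueA a1 ha1 a2 ha2 ha12
    have ebb : G.Adj b1 b2 := hcliqueB b1 hb1B b2 hb2B hb12
    have e11 : G.Adj a1 b1 := (hfB a1 ha1).2
    have e22 : G.Adj a2 b2 := (hfB a2 ha2).2
    have m12 : ¬ G.Adj a1 b2 := fun h => hb12 (hfuniq a1 ha1 b2 hb2B h).symm
    have m21 : ¬ G.Adj a2 b1 := fun h => hb12 (hfuniq a2 ha2 b1 hb1B h)
    exact ⟨sec_c4_iso G huniv ha12 hb12 (hABne a1 ha1 b1 hb1B) (hABne a1 ha1 b2 hb2B)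
      (hABne a2 ha2 b1 hb1B) (hABne a2 ha2 b2 hb2B) eaa ebb e11 e22 m12 m21⟩

open Finset in
private lemma sec_core {V : Type*} [Fintype V] {G : SimpleGraph V} (hG : IsCograph G)
    (hcn : ∀ u v : V, u ≠ v → ¬ G.Adj u v → ∃ w, G.Adj u w ∧ G.Adj w v)
    (h2 : ∀ w : V, (G.induce ({w}ᶜ : Set V)).Connected)
    (N : ℕ) (hN : ∀ x, N ≤ (G.neighborFinset x).card)
    (A B : Finset V) (hd : Disjoint A B) (hU : A ∪ B = Finset.univ)
    (hA2 : 2 ≤ A.card) (hB2 : 2 ≤ B.card)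
    (hsumA : ∑ a ∈ A, (B.filter (G.Adj a)).card ≤ N) :
    Nonempty (G ≃g (SimpleGraph.cycleGraph 4)) := by
  have hsumB : ∑ b ∈ B, (A.filter (G.Adj b)).card ≤ N := by
    rw [← sec_sum_swap_adj]; exact hsumA
  by_cases hintA : ∃ a ∈ A, ∀ b ∈ B, ¬ G.Adj a b
  · obtain ⟨a0, ha0, hint⟩ := hintA
    exact (sec_case1 hG hcn h2 N hN A B hd hU hA2 hB2 hsumB a0 ha0 hint).elim
  by_cases hintB : ∃ b ∈ B, ∀ a ∈ A, ¬ G.Adj b a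
  · obtain ⟨b0, hb0, hint⟩ := hintB
    exact (sec_case1 hG hcn h2 N hN B A hd.symm
      (by rw [Finset.union_comm]; exact hU) hB2 hA2 hsumA b0 hb0 hint).elim
  · push_neg at hintA hintB
    have honeA : ∀ a ∈ A, 1 ≤ (B.filter (G.Adj a)).card := by
      intro a ha
      obtain ⟨b, hb, hadj⟩ := hintA a ha
      exact Finset.card_pos.mpr ⟨b, Finset.mem_filter.mpr ⟨hb, hadj⟩⟩
    have honeB : ∀ b ∈ B, 1 ≤ (A.filter (G.Adj b)).card := by
      intro b hb
      obtain ⟨a, ha, hadj⟩ := hintB b hb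
      exact Finset.card_pos.mpr ⟨a, Finset.mem_filter.mpr ⟨ha, hadj⟩⟩
    exact sec_case3 hG N hN A B hd hU hA2 hB2 hsumA hsumB honeA honeB

open Finset in
private lemma sec_cut_count {V : Type*} [Fintype V] (G : SimpleGraph V) (A' : Finset V)
    (F : Set (Sym2 V))
    (hF : ∀ a b, a ∈ A' → b ∉ A' → G.Adj a b → s(a,b) ∈ F) :
    ∑ a ∈ A', ((A'ᶜ).filter (G.Adj a)).card ≤ F.ncard := by
  set T := A'.biUnion (fun a => ((A'ᶜ).filter (G.Adj a)).image (fun b => s(a,b))) with hT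
  have hTcard : T.card = ∑ a ∈ A', ((A'ᶜ).filter (G.Adj a)).card := by
    rw [hT, Finset.card_biUnion]
    · refine Finset.sum_congr rfl fun a ha => Finset.card_image_of_injOn ?_
      intro b1 h1 b2 h2 he
      rcases Sym2.eq_iff.mp he with ⟨_, h⟩ | ⟨h1', h2'⟩
      · exact h
      · have hb2 : b2 ∈ A'ᶜ := (Finset.mem_filter.mp (Finset.mem_coe.mp h2)).1
        rw [Finset.mem_compl] at hb2
        exact absurd (by rw [← h1']; exact ha) hb2
    · intro a1 h1 a2 h2 hne
      rw [Function.onFun, Finset.disjoint_left]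
      intro e he1 he2
      simp only [Finset.mem_image, Finset.mem_filter, Finset.mem_compl] at he1 he2
      obtain ⟨b1, ⟨hb1, _⟩, rfl⟩ := he1
      obtain ⟨b2, ⟨hb2, _⟩, heq⟩ := he2
      rcases Sym2.eq_iff.mp heq with ⟨h, _⟩ | ⟨h1', h2'⟩
      · exact hne h.symm
      · exact hb2 (by rw [h2']; exact h1)
  have hsub : T ⊆ F.toFinset := by
    intro e he
    rw [hT, Finset.mem_biUnion] at he
    obtain ⟨a, ha, he⟩ := he
    rw [Finset.mem_image] at he
    obtain ⟨b, hb, rfl⟩ := he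
    rw [Finset.mem_filter, Finset.mem_compl] at hb
    exact Set.mem_toFinset.mpr (hF a b ha hb.1 hb.2)
  calc ∑ a ∈ A', ((A'ᶜ).filter (G.Adj a)).card = T.card := hTcard.symm
  _ ≤ F.toFinset.card := Finset.card_le_card hsub
  _ = F.ncard := (Set.ncard_eq_toFinset_card' F).symm

private lemma sec_deg_eq {V : Type*} [Fintype V] (G : SimpleGraph V) (v : V) :
    (G.neighborSet v).ncard = (G.neighborFinset v).card := by
  rw [← Nat.card_coe_set_eq, Nat.card_eq_fintype_card, ← SimpleGraph.degree]
  exact G.card_neighborSet_eq_degree v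

private lemma sec_inc_card {V : Type*} (G : SimpleGraph V) (v : V) :
    (G.incidenceSet v).ncard = (G.neighborSet v).ncard := by
  rw [← Nat.card_coe_set_eq, ← Nat.card_coe_set_eq]
  exact Nat.card_congr (G.incidenceSetEquivNeighborSet v)

end SuperEdgeHelpers

/-- Every 2-connected cograph that is not a 4-cycle is super edge-connected. -/
theorem stmt15 {V : Type*} [Fintype V] (G : SimpleGraph V) (hG : IsCograph G)
    (hk : IsKConnected 2 G)
    (hC4 : ¬ Nonempty (G ≃g (SimpleGraph.cycleGraph 4))) :
    SuperEdgeConnected G := by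
  classical
  have hv : 2 ≤ vConn G := by
    rcases hk with hv | ⟨h21, _⟩
    · exact hv
    · exact absurd h21 (by norm_num)
  have hbound : ∀ S : Set V,
      (¬ (G.induce (Sᶜ)).Connected ∨ (Sᶜ : Set V).ncard ≤ 1) → 2 ≤ S.ncard :=
    fun S h => le_trans hv (Nat.sInf_le ⟨S, rfl, h⟩)
  have huniv : (G.induce ((∅ : Set V)ᶜ)).Connected ∧ ¬ (((∅ : Set V)ᶜ : Set V).ncard ≤ 1) := by
    by_contra hc
    rw [not_and_or, not_not] at hc
    have h := hbound ∅ (by tauto)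
    simp [Set.ncard_empty] at h
  have hGconn : G.Connected := by
    have h := huniv.1
    rw [Set.compl_empty] at h
    exact (SimpleGraph.induceUnivIso G).connected_iff.mp h
  have hcard2 : 2 ≤ Fintype.card V := by
    have h := huniv.2
    rw [Set.compl_empty, Set.ncard_univ, Nat.card_eq_fintype_card] at h
    omega
  have hne : Nonempty V := Fintype.card_pos_iff.mp (by omega)
  haveI := hne
  have hcard3 : 3 ≤ Fintype.card V := by
    obtain ⟨x⟩ := hne
    have h := hbound ({x}ᶜ) (Or.inr (by rw [compl_compl]; simp [Set.ncard_singleton]))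
    have hsum := Set.ncard_add_ncard_compl ({x} : Set V)
    rw [Set.ncard_singleton, Nat.card_eq_fintype_card] at hsum
    omega
  have h2 : ∀ w : V, (G.induce ({w}ᶜ : Set V)).Connected := by
    intro w
    by_contra hc
    have h := hbound {w} (Or.inl hc)
    simp [Set.ncard_singleton] at h
  have hcn : ∀ u v : V, u ≠ v → ¬ G.Adj u v → ∃ w, G.Adj u w ∧ G.Adj w v := by
    intro u v hne' hadj
    obtain ⟨p⟩ := hGconn.preconnected u v
    exact sec_common_nbr hG p hne' hadj
  have hstar : ∀ v : V, ¬ (G.deleteEdges (G.incidenceSet v)).Connected := by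
    intro v hc
    obtain ⟨u, hu⟩ := Fintype.exists_ne_of_one_lt_card (by omega) v
    obtain ⟨p⟩ := hc.preconnected v u
    cases p with
    | nil => exact hu rfl
    | cons h q =>
      rw [SimpleGraph.deleteEdges_adj] at h
      exact h.2 ((G.mem_incidenceSet v _).mpr h.1)
  have heConn_le : ∀ v : V, eConn G ≤ (G.neighborSet v).ncard := fun v =>
    Nat.sInf_le ⟨G.incidenceSet v, G.incidenceSet_subset v, sec_inc_card G v, hstar v⟩
  obtain ⟨v0, hv0⟩ : ∃ v0 : V, minDeg G = (G.neighborSet v0).ncard := by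
    have hne2 : {d : ℕ | ∃ v : V, d = (G.neighborSet v).ncard}.Nonempty :=
      ⟨(G.neighborSet (Classical.arbitrary V)).ncard, ⟨Classical.arbitrary V, rfl⟩⟩
    exact Nat.sInf_mem hne2
  have hld : eConn G ≤ minDeg G := by rw [hv0]; exact heConn_le v0
  have hdle : ∀ x : V, minDeg G ≤ (G.neighborSet x).ncard := fun x => Nat.sInf_le ⟨x, rfl⟩
  refine ⟨hGconn, ?_⟩
  intro F hFsub hFdisc hFcard
  have hnotpre : ¬ (G.deleteEdges F).Preconnected := fun hp =>
    hFdisc (SimpleGraph.Connected.mk hp)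
  obtain ⟨u, w, huw⟩ : ∃ u w : V, ¬ (G.deleteEdges F).Reachable u w := by
    by_contra hc
    push_neg at hc
    exact hnotpre hc
  set A : Set V := {x | (G.deleteEdges F).Reachable u x} with hA
  have huA : u ∈ A := SimpleGraph.Reachable.refl u
  have hwA : w ∉ A := huw
  set F' : Set (Sym2 V) := {e | ∃ a b, a ∈ A ∧ b ∉ A ∧ G.Adj a b ∧ e = s(a,b)} with hF'
  have hF'subF : F' ⊆ F := by
    rintro e ⟨a, b, ha, hb, hadj, rfl⟩
    by_contra hn
    have hAdj : (G.deleteEdges F).Adj a b := SimpleGraph.deleteEdges_adj.mpr ⟨hadj, hn⟩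
    exact hb (ha.trans hAdj.reachable)
  have hF'edge : F' ⊆ G.edgeSet := by
    rintro e ⟨a, b, _, _, hadj, rfl⟩
    exact G.mem_edgeSet.mpr hadj
  have hwalkA : ∀ x y : V, (G.deleteEdges F').Walk x y → x ∈ A → y ∈ A := by
    intro x y p
    induction p with
    | nil => exact id
    | @cons x z y h q ih =>
      intro hx
      rw [SimpleGraph.deleteEdges_adj] at h
      refine ih ?_
      by_contra hz
      exact h.2 ⟨x, z, hx, hz, h.1, rfl⟩
  have hF'disc : ¬ (G.deleteEdges F').Connected := by
    intro hc
    obtain ⟨p⟩ := hc.preconnected u w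
    exact hwA (hwalkA u w p huA)
  have hle1 : eConn G ≤ F'.ncard := Nat.sInf_le ⟨F', hF'edge, rfl, hF'disc⟩
  have hFeq : F' = F := Set.eq_of_subset_of_ncard_le hF'subF (by omega) (Set.toFinite F)
  set A' : Finset V := A.toFinset with hA'
  have hmemA' : ∀ x : V, x ∈ A' ↔ x ∈ A := fun x => Set.mem_toFinset
  have hdisj : Disjoint A' A'ᶜ := disjoint_compl_right
  have hUU : A' ∪ A'ᶜ = Finset.univ := Finset.union_compl A'
  have hsum : ∑ a ∈ A', ((A'ᶜ).filter (G.Adj a)).card ≤ minDeg G := by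
    refine le_trans (sec_cut_count G A' F ?_) ?_
    · intro a b ha hb hadj
      rw [← hFeq]
      exact ⟨a, b, (hmemA' a).mp ha, fun hbA => hb ((hmemA' b).mpr hbA), hadj, rfl⟩
    · rw [hFcard]; exact hld
  have hNdeg : ∀ x : V, minDeg G ≤ (G.neighborFinset x).card := by
    intro x
    rw [← sec_deg_eq]
    exact hdle x
  have hA'pos : 1 ≤ A'.card := Finset.card_pos.mpr ⟨u, (hmemA' u).mpr huA⟩
  have hB'pos : 1 ≤ (A'ᶜ).card := Finset.card_pos.mpr
    ⟨w, Finset.mem_compl.mpr (fun hw => hwA ((hmemA' w).mp hw))⟩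
  by_cases hA1 : A'.card = 1
  · obtain ⟨v, hvA⟩ := Finset.card_eq_one.mp hA1
    have hvmem : ∀ x : V, x ∈ A ↔ x = v := by
      intro x
      rw [← hmemA', hvA, Finset.mem_singleton]
    have hFinc : F = G.incidenceSet v := by
      rw [← hFeq]
      ext e
      constructor
      · rintro ⟨a, b, ha, hb, hadj, rfl⟩
        have hav : a = v := (hvmem a).mp ha
        subst hav
        exact ⟨G.mem_edgeSet.mpr hadj, Sym2.mem_mk_left a b⟩
      · intro he
        induction e using Sym2.ind with
        | _ x y =>
          obtain ⟨hedge, hvin⟩ := he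
          have hadj : G.Adj x y := (G.mem_edgeSet).mp hedge
          rcases Sym2.mem_iff.mp hvin with h | h
          · subst h
            exact ⟨v, y, (hvmem v).mpr rfl, fun hy => hadj.ne ((hvmem y).mp hy).symm,
              hadj, rfl⟩
          · subst h
            exact ⟨v, x, (hvmem v).mpr rfl, fun hx => hadj.ne ((hvmem x).mp hx),
              hadj.symm, Sym2.eq_swap⟩
    refine ⟨v, hFinc, ?_⟩
    have hdeg : F.ncard = (G.neighborSet v).ncard := by rw [hFinc, sec_inc_card]
    have hx := hdle v
    omega
  by_cases hB1 : (A'ᶜ).card = 1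
  · obtain ⟨v, hvB⟩ := Finset.card_eq_one.mp hB1
    have hvmem : ∀ x : V, x ∉ A ↔ x = v := by
      intro x
      rw [← hmemA', ← Finset.mem_compl, hvB, Finset.mem_singleton]
    have hFinc : F = G.incidenceSet v := by
      rw [← hFeq]
      ext e
      constructor
      · rintro ⟨a, b, ha, hb, hadj, rfl⟩
        have hbv : b = v := (hvmem b).mp hb
        subst hbv
        exact ⟨G.mem_edgeSet.mpr hadj, Sym2.mem_mk_right a b⟩
      · intro he
        induction e using Sym2.ind with
        | _ x y =>
          obtain ⟨hedge, hvin⟩ := he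
          have hadj : G.Adj x y := (G.mem_edgeSet).mp hedge
          rcases Sym2.mem_iff.mp hvin with h | h
          · subst h
            have hyA : y ∈ A := by
              by_contra hy
              exact hadj.ne' ((hvmem y).mp hy)
            exact ⟨y, v, hyA, (hvmem v).mpr rfl, hadj.symm, Sym2.eq_swap⟩
          · subst h
            have hxA : x ∈ A := by
              by_contra hx
              exact hadj.ne ((hvmem x).mp hx)
            exact ⟨x, v, hxA, (hvmem v).mpr rfl, hadj, rfl⟩
    refine ⟨v, hFinc, ?_⟩
    have hdeg : F.ncard = (G.neighborSet v).ncard := by rw [hFinc, sec_inc_card]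
    have hx := hdle v
    omega
  · exfalso
    exact hC4 (sec_core hG hcn h2 (minDeg G) hNdeg A' A'ᶜ hdisj hUU (by omega) (by omega) hsum)
end

section
/- Every maximally connected cograph not isomorphic to the 4-cycle C_4 is super edge-connected. -/
open SimpleGraph

section Aux
open Finset
variable {V : Type*} [Fintype V] [DecidableEq V] {G : SimpleGraph V} [DecidableRel G.Adj]


lemma mkP4 {a b c d : V} (hab : G.Adj a b) (hbc : G.Adj b c) (hcd : G.Adj c d)
    (hac : ¬ G.Adj a c) (had : ¬ G.Adj a d) (hbd : ¬ G.Adj b d) :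
    Nonempty (SimpleGraph.pathGraph 4 ↪g G) := by
  have hac' : a ≠ c := by rintro rfl; exact had hcd
  have hbd' : b ≠ d := by rintro rfl; exact had hab
  have had' : a ≠ d := by rintro rfl; exact hac hcd.symm
  let f : Fin 4 → V := ![a, b, c, d]
  have hinj : Function.Injective f := by
    intro i j hij
    fin_cases i <;> fin_cases j <;> simp_all [f] <;>
      first
        | rfl
        | exact absurd hij (G.ne_of_adj (by assumption))
        | exact absurd hij.symm (G.ne_of_adj (by assumption))
  refine ⟨⟨⟨f, hinj⟩, ?_⟩⟩
  intro i j
  fin_cases i <;> fin_cases j <;> simp [f, pathGraph_adj] <;>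
    first
      | assumption
      | exact hab.symm
      | exact hbc.symm
      | exact hcd.symm
      | exact fun h => hac h.symm
      | exact fun h => had h.symm
      | exact fun h => hbd h.symm
      | exact iff_of_true (by first | assumption | exact hab.symm | exact hbc.symm | exact hcd.symm) (by decide)
      | exact iff_of_false (by first | assumption | exact fun h => hac h.symm | exact fun h => had h.symm | exact fun h => hbd h.symm) (by decide)

lemma diam2 (hG : IsEmpty (SimpleGraph.pathGraph 4 ↪g G)) :
    ∀ {u v : V}, (p : G.Walk u v) → u ≠ v → ¬ G.Adj u v →
      ∃ w, G.Adj u w ∧ G.Adj w v := by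
  intro u v p
  induction p with
  | nil => intro h _; exact absurd rfl h
  | @cons u x v h q ih =>
    intro hne hadj
    by_cases hxv : x = v
    · subst hxv; exact absurd h hadj
    by_cases hxadj : G.Adj x v
    · exact ⟨x, h, hxadj⟩
    obtain ⟨w, hxw, hwv⟩ := ih hxv hxadj
    by_cases huw : G.Adj u w
    · exact ⟨w, huw, hwv⟩
    · obtain ⟨e⟩ := mkP4 h hxw hwv huw hadj hxadj
      exact absurd hG (by rw [not_isEmpty_iff]; exact ⟨e⟩)

variable (G) in
/-- The set of edges of `G` crossing the partition `(A, Aᶜ)`. -/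
def xF (A : Finset V) : Set (Sym2 V) :=
  {e | ∃ a b, a ∈ A ∧ b ∉ A ∧ G.Adj a b ∧ e = s(a, b)}

variable (G) in
/-- Finset of crossing edges. -/
def xFin (A : Finset V) : Finset (Sym2 V) :=
  A.biUnion (fun a => (G.neighborFinset a \ A).image (fun b => s(a, b)))
lemma mem_xF_iff {A : Finset V} {e : Sym2 V} :
    e ∈ xF G A ↔ ∃ a b, a ∈ A ∧ b ∉ A ∧ G.Adj a b ∧ e = s(a, b) := Iff.rfl

lemma xF_coe (A : Finset V) : xF G A = ↑(xFin G A) := by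
  ext e
  simp only [xF, xFin, Set.mem_setOf_eq, coe_biUnion, Set.mem_iUnion, mem_coe, mem_image,
    mem_sdiff, mem_neighborFinset]
  constructor
  · rintro ⟨a, b, ha, hb, hadj, rfl⟩
    exact ⟨a, ha, b, ⟨hadj, hb⟩, rfl⟩
  · rintro ⟨a, ha, b, ⟨hadj, hb⟩, rfl⟩
    exact ⟨a, b, ha, hb, hadj, rfl⟩

lemma xF_subset_edgeSet (A : Finset V) : xF G A ⊆ G.edgeSet := by
  rintro e ⟨a, b, _, _, hadj, rfl⟩; exact hadj

lemma xF_compl (A : Finset V) : xF G Aᶜ = xF G A := by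
  ext e
  constructor
  · rintro ⟨a, b, ha, hb, hadj, rfl⟩
    simp only [Finset.mem_compl, not_not] at ha hb
    exact ⟨b, a, hb, ha, hadj.symm, Sym2.eq_swap⟩
  · rintro ⟨a, b, ha, hb, hadj, rfl⟩
    exact ⟨b, a, by simpa using hb, by simpa using ha, hadj.symm, Sym2.eq_swap⟩

lemma xF_ncard (A : Finset V) :
    (xF G A).ncard = ∑ a ∈ A, (G.neighborFinset a \ A).card := by
  rw [xF_coe, Set.ncard_coe_finset, xFin, Finset.card_biUnion]
  · refine Finset.sum_congr rfl fun a ha => ?_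
    rw [Finset.card_image_of_injOn]
    intro b hb b' hb' hbb
    simp only [Finset.coe_sdiff, Set.mem_diff, mem_coe, mem_neighborFinset] at hb hb'
    rcases Sym2.eq_iff.mp hbb with ⟨_, h⟩ | ⟨h1, h2⟩
    · exact h
    · exact absurd (h1 ▸ ha) hb'.2
  · intro a ha a' ha' hne
    simp only [Finset.disjoint_left, mem_image, mem_sdiff, mem_neighborFinset]
    rintro e ⟨b, ⟨hadj, hb⟩, rfl⟩ ⟨b', ⟨hadj', hb'⟩, he⟩
    rcases Sym2.eq_iff.mp he.symm with ⟨h1, _⟩ | ⟨h1, h2⟩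
    · exact hne h1
    · exact hb (h2 ▸ ha')

lemma walk_stays {A : Finset V} {F : Set (Sym2 V)} (hF : xF G A ⊆ F) :
    ∀ {a t : V}, (G.deleteEdges F).Walk a t → a ∈ A → t ∈ A := by
  intro a t p
  induction p with
  | nil => exact id
  | @cons a x t h q ih =>
    intro ha
    apply ih
    by_contra hx
    rw [deleteEdges_adj] at h
    exact h.2 (hF ⟨a, x, ha, hx, h.1, rfl⟩)

lemma delete_xF_not_connected {A : Finset V} (hA : A.Nonempty) (hA' : Aᶜ.Nonempty)
    {F : Set (Sym2 V)} (hF : xF G A ⊆ F) : ¬ (G.deleteEdges F).Connected := by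
  intro hc
  obtain ⟨a, ha⟩ := hA; obtain ⟨b, hb⟩ := hA'
  obtain ⟨p⟩ := hc.preconnected a b
  exact (Finset.mem_compl.mp hb) (walk_stays hF p ha)

lemma exists_cross_part [Nonempty V] {F : Set (Sym2 V)}
    (hdis : ¬ (G.deleteEdges F).Connected) :
    ∃ A : Finset V, A.Nonempty ∧ Aᶜ.Nonempty ∧ xF G A ⊆ F := by
  classical
  have hpre : ¬ (G.deleteEdges F).Preconnected := fun hp => hdis ⟨hp⟩
  rw [Preconnected] at hpre
  push_neg at hpre
  obtain ⟨u, v, huv⟩ := hpre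
  refine ⟨Finset.univ.filter (fun x => (G.deleteEdges F).Reachable u x), ⟨u, by simp [Reachable.refl]⟩,
    ⟨v, by simp [huv]⟩, ?_⟩
  rintro e ⟨a, b, ha, hb, hadj, rfl⟩
  simp only [Finset.mem_filter, Finset.mem_univ, true_and] at ha hb
  by_contra heF
  exact hb (ha.trans (SimpleGraph.Adj.reachable (by rw [deleteEdges_adj]; exact ⟨hadj, heF⟩)))

lemma ncard_neighborSet_eq_degree (v : V) : (G.neighborSet v).ncard = G.degree v := by
  rw [Set.ncard_eq_toFinset_card', ← neighborFinset_def]; rfl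

lemma minDeg_le_degree (v : V) : minDeg G ≤ G.degree v :=
  Nat.sInf_le ⟨v, (ncard_neighborSet_eq_degree v).symm⟩

lemma exists_degree_eq_minDeg [Nonempty V] : ∃ v : V, G.degree v = minDeg G := by
  have hne : {d | ∃ v : V, d = (G.neighborSet v).ncard}.Nonempty :=
    ⟨(G.neighborSet (Classical.arbitrary V)).ncard, ⟨_, rfl⟩⟩
  obtain ⟨v, hv⟩ := Nat.sInf_mem hne
  exact ⟨v, by rw [← ncard_neighborSet_eq_degree, ← hv]; rfl⟩

lemma isolated_walk {H : SimpleGraph V} {v : V} (h : ∀ x, ¬ H.Adj v x) :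
    ∀ {t : V}, H.Walk v t → v = t := by
  intro t p
  cases p with
  | nil => rfl
  | cons ha q => exact absurd ha (h _)

lemma incidence_disconnects {v u : V} (hne : u ≠ v) :
    ¬ (G.deleteEdges (G.incidenceSet v)).Connected := by
  intro hc
  obtain ⟨p⟩ := hc.preconnected v u
  have hiso : ∀ x, ¬ (G.deleteEdges (G.incidenceSet v)).Adj v x := by
    intro x hx
    rw [deleteEdges_adj] at hx
    exact hx.2 (G.mk'_mem_incidenceSet_left_iff.mpr hx.1)
  exact hne (isolated_walk hiso p).symm

lemma ncard_incidenceSet (v : V) : (G.incidenceSet v).ncard = G.degree v := by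
  rw [Set.ncard_eq_toFinset_card', Set.toFinset_card, card_incidenceSet_eq_degree]


lemma nbr_inter_le {A : Finset V} {a : V} (ha : a ∈ A) :
    (G.neighborFinset a ∩ A).card ≤ A.card - 1 := by
  have hsub : G.neighborFinset a ∩ A ⊆ A.erase a := by
    intro x hx
    simp only [Finset.mem_inter, mem_neighborFinset] at hx
    rw [Finset.mem_erase]
    exact ⟨(G.ne_of_adj hx.1).symm, hx.2⟩
  calc (G.neighborFinset a ∩ A).card ≤ (A.erase a).card := card_le_card hsub
    _ = A.card - 1 := card_erase_of_mem ha

lemma deg_split (A : Finset V) (a : V) :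
    (G.neighborFinset a ∩ A).card + (G.neighborFinset a \ A).card = G.degree a :=
  Finset.card_inter_add_card_sdiff _ _

lemma f_lower {A : Finset V} (hA : A.Nonempty)
    (hall : ∀ a ∈ A, 1 ≤ (G.neighborFinset a \ A).card) :
    minDeg G ≤ ∑ a ∈ A, (G.neighborFinset a \ A).card := by
  set δ := minDeg G with hδ
  by_cases hk : δ ≤ A.card
  · calc δ ≤ A.card := hk
      _ = ∑ a ∈ A, 1 := by simp
      _ ≤ _ := Finset.sum_le_sum hall
  · push_neg at hk
    have hk1 : 1 ≤ A.card := hA.card_pos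
    have key : ∀ a ∈ A, δ - A.card + 1 ≤ (G.neighborFinset a \ A).card := by
      intro a ha
      have h1 := deg_split (G := G) A a
      have h2 := nbr_inter_le (G := G) ha
      have h3 : δ ≤ G.degree a := minDeg_le_degree (G := G) a
      omega
    have h4 : δ - A.card ≤ A.card * (δ - A.card) := Nat.le_mul_of_pos_left _ hk1
    have h5 : A.card * (δ - A.card + 1) = A.card * (δ - A.card) + A.card := by ring
    calc δ ≤ A.card * (δ - A.card + 1) := by omega
      _ = ∑ _a ∈ A, (δ - A.card + 1) := by simp [Finset.sum_const, mul_comm]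
      _ ≤ _ := Finset.sum_le_sum key

lemma f_eq {A : Finset V} (h2 : 2 ≤ A.card)
    (hall : ∀ a ∈ A, 1 ≤ (G.neighborFinset a \ A).card)
    (hsum : ∑ a ∈ A, (G.neighborFinset a \ A).card = minDeg G) :
    A.card = minDeg G ∧ ∀ a ∈ A, (G.neighborFinset a \ A).card = 1 ∧
      G.degree a = minDeg G ∧ G.neighborFinset a ∩ A = A.erase a := by
  set δ := minDeg G with hδ
  have hkle : A.card ≤ δ := by
    calc A.card = ∑ _a ∈ A, 1 := by simp
      _ ≤ ∑ a ∈ A, (G.neighborFinset a \ A).card := Finset.sum_le_sum hall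
      _ = δ := hsum
  have hcard : A.card = δ := by
    by_contra hne
    have hk : A.card < δ := lt_of_le_of_ne hkle hne
    have key : ∀ a ∈ A, δ - A.card + 1 ≤ (G.neighborFinset a \ A).card := by
      intro a ha
      have h1 := deg_split (G := G) A a
      have h3 : δ ≤ G.degree a := minDeg_le_degree (G := G) a
      have h2 := nbr_inter_le (G := G) ha
      omega
    have : A.card * (δ - A.card + 1) ≤ δ := by
      calc A.card * (δ - A.card + 1) = ∑ _a ∈ A, (δ - A.card + 1) := by
            simp [Finset.sum_const, mul_comm]
        _ ≤ ∑ a ∈ A, (G.neighborFinset a \ A).card := Finset.sum_le_sum key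
        _ = δ := hsum
    have hm : 1 ≤ δ - A.card := by omega
    have hgt : A.card * (δ - A.card) ≥ 2 * (δ - A.card) := Nat.mul_le_mul_right _ h2
    have h5 : A.card * (δ - A.card + 1) = A.card * (δ - A.card) + A.card := by ring
    omega
  refine ⟨hcard, fun a ha => ?_⟩
  have hone : (G.neighborFinset a \ A).card = 1 := by
    by_contra hne1
    have hge2 : 2 ≤ (G.neighborFinset a \ A).card := by
      have := hall a ha; omega
    have hrest : A.card - 1 ≤ ∑ x ∈ A.erase a, (G.neighborFinset x \ A).card := by
      calc A.card - 1 = (A.erase a).card := (card_erase_of_mem ha).symm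
        _ = ∑ _x ∈ A.erase a, 1 := by simp
        _ ≤ _ := Finset.sum_le_sum (fun x hx => hall x (Finset.mem_of_mem_erase hx))
    have hsplit := Finset.add_sum_erase A (fun x => (G.neighborFinset x \ A).card) ha
    rw [hsum] at hsplit
    have hsplit2 : (G.neighborFinset a \ A).card
        + ∑ x ∈ A.erase a, (G.neighborFinset x \ A).card = δ := hsplit
    omega
  have h1 := deg_split (G := G) A a
  have h3 : δ ≤ G.degree a := minDeg_le_degree (G := G) a
  have h2 := nbr_inter_le (G := G) ha
  have hdeg : G.degree a = δ := by omega
  have hinter : (G.neighborFinset a ∩ A).card = A.card - 1 := by omega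
  refine ⟨hone, hdeg, ?_⟩
  have hsub : G.neighborFinset a ∩ A ⊆ A.erase a := by
    intro x hx
    simp only [Finset.mem_inter, mem_neighborFinset] at hx
    rw [Finset.mem_erase]
    exact ⟨(G.ne_of_adj hx.1).symm, hx.2⟩
  refine Finset.eq_of_subset_of_card_le hsub ?_
  rw [card_erase_of_mem ha, hinter]


lemma no_out_nbr {A : Finset V} {a : V} (h : (G.neighborFinset a \ A).card = 0) :
    ∀ x, G.Adj a x → x ∈ A := by
  intro x hx
  by_contra hxA
  exact absurd (Finset.card_eq_zero.mp h ▸ Finset.mem_sdiff.mpr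
    ⟨mem_neighborFinset _ _ _ |>.mpr hx, hxA⟩) (Finset.notMem_empty x)

lemma diam2' (hG : IsEmpty (SimpleGraph.pathGraph 4 ↪g G)) (hconn : G.Connected)
    {u v : V} (hne : u ≠ v) (hadj : ¬ G.Adj u v) : ∃ w, G.Adj u w ∧ G.Adj w v := by
  obtain ⟨p⟩ := hconn.preconnected u v
  exact diam2 hG p hne hadj

lemma plesnik (hG : IsEmpty (SimpleGraph.pathGraph 4 ↪g G)) (hconn : G.Connected)
    {A : Finset V} (hA : A.Nonempty) (hA' : Aᶜ.Nonempty) :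
    minDeg G ≤ (xF G A).ncard := by
  by_cases h1 : ∀ a ∈ A, 1 ≤ (G.neighborFinset a \ A).card
  · rw [xF_ncard]; exact f_lower hA h1
  by_cases h2 : ∀ b ∈ Aᶜ, 1 ≤ (G.neighborFinset b \ Aᶜ).card
  · rw [← xF_compl, xF_ncard]; exact f_lower hA' h2
  exfalso
  push_neg at h1 h2
  obtain ⟨a, ha, ha0⟩ := h1
  obtain ⟨b, hb, hb0⟩ := h2
  rw [Nat.lt_one_iff] at ha0 hb0
  have hbA : b ∉ A := Finset.mem_compl.mp hb
  have hne : a ≠ b := fun h => hbA (h ▸ ha)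
  have hadj : ¬ G.Adj a b := fun h => hbA (no_out_nbr ha0 b h)
  obtain ⟨w, haw, hwb⟩ := diam2' hG hconn hne hadj
  have hwA : w ∈ A := no_out_nbr ha0 w haw
  have : w ∈ G.neighborFinset b \ Aᶜ := Finset.mem_sdiff.mpr
    ⟨mem_neighborFinset _ _ _ |>.mpr hwb.symm, by simp [hwA]⟩
  rw [Finset.card_eq_zero.mp hb0] at this
  exact Finset.notMem_empty _ this

lemma eConn_eq (hG : IsEmpty (SimpleGraph.pathGraph 4 ↪g G)) (hconn : G.Connected)
    (hcard : 1 < Fintype.card V) : eConn G = minDeg G := by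
  have : Nonempty V := Fintype.card_pos_iff.mp (by omega)
  obtain ⟨v, hv⟩ := exists_degree_eq_minDeg (G := G)
  obtain ⟨u, hu⟩ := Fintype.exists_ne_of_one_lt_card hcard v
  have hmem : minDeg G ∈ {n | ∃ F : Set (Sym2 V), F ⊆ G.edgeSet ∧ F.ncard = n ∧
      ¬ (G.deleteEdges F).Connected} :=
    ⟨G.incidenceSet v, G.incidenceSet_subset v, by rw [ncard_incidenceSet, hv],
      incidence_disconnects hu⟩
  apply le_antisymm (Nat.sInf_le hmem)
  apply le_csInf ⟨_, hmem⟩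
  rintro n ⟨F, hFsub, rfl, hFdis⟩
  obtain ⟨A, hA, hA', hxf⟩ := exists_cross_part hFdis
  calc minDeg G ≤ (xF G A).ncard := plesnik hG hconn hA hA'
    _ ≤ F.ncard := Set.ncard_le_ncard hxf (Set.toFinite F)


lemma core2 (hG : IsEmpty (SimpleGraph.pathGraph 4 ↪g G)) (hconn : G.Connected)
    (hmax : vConn G = minDeg G)
    {A : Finset V} {a0 : V} (ha0A : a0 ∈ A) (ha0 : (G.neighborFinset a0 \ A).card = 0)
    (h2 : 2 ≤ Aᶜ.card)
    (hsum : (xF G A).ncard = minDeg G) : False := by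
  classical
  set δ := minDeg G with hδ
  have ha0c : a0 ∉ Aᶜ := by simp [ha0A]
  have hnadj : ∀ b ∈ Aᶜ, ¬ G.Adj a0 b := by
    intro b hb hadj
    exact (Finset.mem_compl.mp hb) (no_out_nbr ha0 b hadj)
  have hane : ∀ b ∈ Aᶜ, a0 ≠ b := fun b hb h => (Finset.mem_compl.mp hb) (h ▸ ha0A)
  -- every vertex of Aᶜ has a crossing edge
  have hall : ∀ b ∈ Aᶜ, 1 ≤ (G.neighborFinset b \ Aᶜ).card := by
    intro b hb
    by_contra hc
    push_neg at hc
    rw [Nat.lt_one_iff] at hc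
    obtain ⟨c, hac, hcb⟩ := diam2' hG hconn (hane b hb) (hnadj b hb)
    have hcA : c ∈ A := no_out_nbr ha0 c hac
    have : c ∈ G.neighborFinset b \ Aᶜ := Finset.mem_sdiff.mpr
      ⟨mem_neighborFinset _ _ _ |>.mpr hcb.symm, by simp [hcA]⟩
    rw [Finset.card_eq_zero.mp hc] at this
    exact Finset.notMem_empty _ this
  have hsum' : ∑ b ∈ Aᶜ, (G.neighborFinset b \ Aᶜ).card = δ := by
    rw [← xF_ncard, xF_compl]; exact hsum
  obtain ⟨hcardB, hprops⟩ := f_eq h2 hall hsum'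
  -- the unique cross-neighbour of each b ∈ Aᶜ
  have hw : ∀ b ∈ Aᶜ, ∃ x, G.neighborFinset b \ Aᶜ = {x} := by
    intro b hb
    exact Finset.card_eq_one.mp (hprops b hb).1
  choose w hweq using hw
  have hwmem : ∀ (b) (hb : b ∈ Aᶜ), w b hb ∈ G.neighborFinset b \ Aᶜ := by
    intro b hb; rw [hweq b hb]; exact Finset.mem_singleton_self _
  have hwadj : ∀ (b) (hb : b ∈ Aᶜ), G.Adj b (w b hb) := by
    intro b hb
    have := hwmem b hb
    rw [Finset.mem_sdiff, mem_neighborFinset] at this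
    exact this.1
  have hwA : ∀ (b) (hb : b ∈ Aᶜ), w b hb ∈ A := by
    intro b hb
    have := (Finset.mem_sdiff.mp (hwmem b hb)).2
    simpa using this
  have huniq : ∀ (b) (hb : b ∈ Aᶜ) (x), G.Adj b x → x ∉ Aᶜ → x = w b hb := by
    intro b hb x hadj hx
    have : x ∈ G.neighborFinset b \ Aᶜ := Finset.mem_sdiff.mpr
      ⟨mem_neighborFinset _ _ _ |>.mpr hadj, hx⟩
    rw [hweq b hb] at this
    exact Finset.mem_singleton.mp this
  -- a0 is adjacent to each w b
  have ha0w : ∀ (b) (hb : b ∈ Aᶜ), G.Adj a0 (w b hb) := by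
    intro b hb
    obtain ⟨c, hac, hcb⟩ := diam2' hG hconn (hane b hb) (hnadj b hb)
    have hcA : c ∈ A := no_out_nbr ha0 c hac
    have : c = w b hb := huniq b hb c hcb.symm (by simp [hcA])
    exact this ▸ hac
  have ha0ne : ∀ (b) (hb : b ∈ Aᶜ), a0 ≠ w b hb := by
    intro b hb h
    exact hnadj b hb (h ▸ (hwadj b hb).symm)
  -- the set of cross-neighbours W
  set W : Finset V := Aᶜ.attach.image (fun b => w b.1 b.2) with hW
  have hWsubA : ∀ x ∈ W, x ∈ A := by
    intro x hx
    rw [hW, Finset.mem_image] at hx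
    obtain ⟨b, _, rfl⟩ := hx
    exact hwA b.1 b.2
  have ha0W : a0 ∉ W := by
    intro hx
    rw [hW, Finset.mem_image] at hx
    obtain ⟨b, _, h⟩ := hx
    exact ha0ne b.1 b.2 h.symm
  -- W is a vertex cut
  have hdisc : ¬ (G.induce ((↑W : Set V)ᶜ)).Connected := by
    intro hc
    obtain ⟨b1, hb1⟩ := Finset.card_pos.mp (by omega : 0 < Aᶜ.card)
    have hb1W : b1 ∉ W := fun h => (Finset.mem_compl.mp hb1) (hWsubA b1 h)
    have hstay : ∀ {x y : ((↑W : Set V)ᶜ : Set V)},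
        (G.induce ((↑W : Set V)ᶜ)).Walk x y → x.1 ∈ Aᶜ → y.1 ∈ Aᶜ := by
      intro x y p
      induction p with
      | nil => exact id
      | @cons x z y h q ih =>
        intro hx
        apply ih
        by_contra hz
        have hGadj : G.Adj x.1 z.1 := h
        have hzW : z.1 ∈ W :=
          Finset.mem_image.mpr ⟨⟨x.1, hx⟩, Finset.mem_attach _ _,
            (huniq x.1 hx z.1 hGadj hz).symm⟩
        have hz2 : z.1 ∉ (↑W : Set V) := z.2
        exact hz2 hzW
    obtain ⟨p⟩ := hc.preconnected ⟨b1, by simpa using hb1W⟩ ⟨a0, by simpa using ha0W⟩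
    exact ha0c (hstay p hb1)
  -- W is a cutset, so δ ≤ |W| ≤ |Aᶜ| = δ
  have hvle : vConn G ≤ W.card :=
    Nat.sInf_le ⟨(↑W : Set V), Set.ncard_coe_finset W, Or.inl hdisc⟩
  have hWle : W.card ≤ Aᶜ.card := le_trans Finset.card_image_le (le_of_eq (Finset.card_attach))
  have hWcard : W.card = Aᶜ.attach.card := by
    rw [Finset.card_attach]
    omega
  have hinj : Set.InjOn (fun b : {x // x ∈ Aᶜ} => w b.1 b.2) ↑Aᶜ.attach :=
    Finset.card_image_iff.mp hWcard
  have wne : ∀ (b1) (hb1 : b1 ∈ Aᶜ) (b2) (hb2 : b2 ∈ Aᶜ), b1 ≠ b2 →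
      w b1 hb1 ≠ w b2 hb2 := by
    intro b1 hb1 b2 hb2 hne he
    have := hinj (Finset.mem_coe.mpr (Finset.mem_attach _ ⟨b1, hb1⟩))
      (Finset.mem_coe.mpr (Finset.mem_attach _ ⟨b2, hb2⟩)) he
    exact hne (congrArg Subtype.val this)
  -- pick two distinct vertices of Aᶜ and exhibit an induced P4
  obtain ⟨b1, hb1, b2, hb2, hbne⟩ := Finset.one_lt_card.mp (by omega : 1 < Aᶜ.card)
  have hcd : G.Adj b1 b2 := by
    have heq := (hprops b1 hb1).2.2
    have h1 : b2 ∈ G.neighborFinset b1 ∩ Aᶜ :=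
      (Finset.ext_iff.mp heq b2).mpr (Finset.mem_erase.mpr ⟨hbne.symm, hb2⟩)
    exact (mem_neighborFinset _ _ _).mp (Finset.mem_inter.mp h1).1
  have hbd : ¬ G.Adj (w b1 hb1) b2 := by
    intro h
    have : w b1 hb1 = w b2 hb2 := huniq b2 hb2 (w b1 hb1) h.symm (by simp [hwA b1 hb1])
    exact wne b1 hb1 b2 hb2 hbne this
  obtain ⟨emb⟩ := mkP4 (ha0w b1 hb1) (hwadj b1 hb1).symm hcd
    (hnadj b1 hb1) (hnadj b2 hb2) hbd
  exact hG.false emb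

lemma buildC4 {a1 a2 b1 b2 : V} (hVcard : Fintype.card V = 4)
    (ha12 : a1 ≠ a2) (hb12 : b1 ≠ b2) (hab1 : a1 ≠ b1) (hab2 : a1 ≠ b2)
    (hab3 : a2 ≠ b1) (hab4 : a2 ≠ b2)
    (hA12 : G.Adj a1 a2) (hB12 : G.Adj b1 b2) (h11 : G.Adj a1 b1) (h22 : G.Adj a2 b2)
    (h12 : ¬ G.Adj a1 b2) (h21 : ¬ G.Adj a2 b1) :
    Nonempty (G ≃g (SimpleGraph.cycleGraph 4)) := by
  let g : Fin 4 → V := ![a1, a2, b2, b1]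
  have hginj : Function.Injective g := by
    intro i j hij
    fin_cases i <;> fin_cases j <;> simp_all [g] <;> first
      | rfl
      | exact absurd hij (by assumption)
      | exact absurd hij.symm (by assumption)
      | exact absurd hij (Ne.symm (by assumption))
      | exact absurd hij.symm (Ne.symm (by assumption))
  have hgbij : Function.Bijective g :=
    (Fintype.bijective_iff_injective_and_card g).mpr ⟨hginj, by simp [hVcard]⟩
  have hiso : ∀ i j : Fin 4, G.Adj (g i) (g j) ↔ (SimpleGraph.cycleGraph 4).Adj i j := by
    intro i j
    fin_cases i <;> fin_cases j <;> simp [g] <;> first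
      | exact iff_of_true (by first | assumption | exact hA12.symm | exact hB12.symm | exact h11.symm | exact h22.symm) (by decide)
      | exact iff_of_false (by first | exact G.irrefl _ | assumption | exact fun h => h12 h.symm | exact fun h => h21 h.symm) (by decide)
      | exact (by first | assumption | exact hA12.symm | exact hB12.symm | exact h11.symm | exact h22.symm)
      | exact (by first | assumption | exact fun h => h12 h.symm | exact fun h => h21 h.symm)
  exact ⟨(SimpleGraph.Iso.symm ⟨Equiv.ofBijective g hgbij, fun {i j} => hiso i j⟩ : G ≃g _)⟩

lemma core3 (hG : IsEmpty (SimpleGraph.pathGraph 4 ↪g G))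
    (hC4 : ¬ Nonempty (G ≃g (SimpleGraph.cycleGraph 4)))
    {A : Finset V} (h2A : 2 ≤ A.card) (h2B : 2 ≤ Aᶜ.card)
    (hallA : ∀ a ∈ A, 1 ≤ (G.neighborFinset a \ A).card)
    (hallB : ∀ b ∈ Aᶜ, 1 ≤ (G.neighborFinset b \ Aᶜ).card)
    (hsum : (xF G A).ncard = minDeg G) : False := by
  classical
  set δ := minDeg G with hδ
  have hsumA : ∑ a ∈ A, (G.neighborFinset a \ A).card = δ := by
    rw [← xF_ncard]; exact hsum
  have hsumB : ∑ b ∈ Aᶜ, (G.neighborFinset b \ Aᶜ).card = δ := by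
    rw [← xF_ncard, xF_compl]; exact hsum
  obtain ⟨hcardA, hpropsA⟩ := f_eq h2A hallA hsumA
  obtain ⟨hcardB, hpropsB⟩ := f_eq h2B hallB hsumB
  -- unique cross neighbours
  have hmA : ∀ a ∈ A, ∃ x, G.neighborFinset a \ A = {x} := by
    intro a ha; exact Finset.card_eq_one.mp (hpropsA a ha).1
  have hmB : ∀ b ∈ Aᶜ, ∃ x, G.neighborFinset b \ Aᶜ = {x} := by
    intro b hb; exact Finset.card_eq_one.mp (hpropsB b hb).1
  choose m hmeq using hmA
  choose w hweq using hmB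
  have hmadj : ∀ (a) (ha : a ∈ A), G.Adj a (m a ha) := by
    intro a ha
    have : m a ha ∈ G.neighborFinset a \ A := by
      rw [hmeq a ha]; exact Finset.mem_singleton_self _
    exact (mem_neighborFinset _ _ _).mp (Finset.mem_sdiff.mp this).1
  have hmB' : ∀ (a) (ha : a ∈ A), m a ha ∈ Aᶜ := by
    intro a ha
    have : m a ha ∈ G.neighborFinset a \ A := by
      rw [hmeq a ha]; exact Finset.mem_singleton_self _
    exact Finset.mem_compl.mpr (Finset.mem_sdiff.mp this).2
  have hwadj : ∀ (b) (hb : b ∈ Aᶜ), G.Adj b (w b hb) := by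
    intro b hb
    have : w b hb ∈ G.neighborFinset b \ Aᶜ := by
      rw [hweq b hb]; exact Finset.mem_singleton_self _
    exact (mem_neighborFinset _ _ _).mp (Finset.mem_sdiff.mp this).1
  have hwA : ∀ (b) (hb : b ∈ Aᶜ), w b hb ∈ A := by
    intro b hb
    have : w b hb ∈ G.neighborFinset b \ Aᶜ := by
      rw [hweq b hb]; exact Finset.mem_singleton_self _
    have := (Finset.mem_sdiff.mp this).2
    simpa using this
  have huniqA : ∀ (a) (ha : a ∈ A) (x), G.Adj a x → x ∉ A → x = m a ha := by
    intro a ha x hadj hx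
    have : x ∈ G.neighborFinset a \ A := Finset.mem_sdiff.mpr
      ⟨(mem_neighborFinset _ _ _).mpr hadj, hx⟩
    rw [hmeq a ha] at this
    exact Finset.mem_singleton.mp this
  have huniqB : ∀ (b) (hb : b ∈ Aᶜ) (x), G.Adj b x → x ∉ Aᶜ → x = w b hb := by
    intro b hb x hadj hx
    have : x ∈ G.neighborFinset b \ Aᶜ := Finset.mem_sdiff.mpr
      ⟨(mem_neighborFinset _ _ _).mpr hadj, hx⟩
    rw [hweq b hb] at this
    exact Finset.mem_singleton.mp this
  -- w ∘ m = id
  have hwm : ∀ (a) (ha : a ∈ A), w (m a ha) (hmB' a ha) = a := by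
    intro a ha
    exact (huniqB (m a ha) (hmB' a ha) a (hmadj a ha).symm (by simp [ha])).symm
  -- cliques
  have hclqA : ∀ (a a' : V), a ∈ A → a' ∈ A → a ≠ a' → G.Adj a a' := by
    intro a a' ha ha' hne
    have heq := (hpropsA a ha).2.2
    have h1 : a' ∈ G.neighborFinset a ∩ A :=
      (Finset.ext_iff.mp heq a').mpr (Finset.mem_erase.mpr ⟨hne.symm, ha'⟩)
    exact (mem_neighborFinset _ _ _).mp (Finset.mem_inter.mp h1).1
  have hclqB : ∀ (b b' : V), b ∈ Aᶜ → b' ∈ Aᶜ → b ≠ b' → G.Adj b b' := by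
    intro b b' hb hb' hne
    have heq := (hpropsB b hb).2.2
    have h1 : b' ∈ G.neighborFinset b ∩ Aᶜ :=
      (Finset.ext_iff.mp heq b').mpr (Finset.mem_erase.mpr ⟨hne.symm, hb'⟩)
    exact (mem_neighborFinset _ _ _).mp (Finset.mem_inter.mp h1).1
  by_cases hδ3 : 3 ≤ δ
  · -- find an induced P4
    obtain ⟨a1, ha1⟩ := Finset.card_pos.mp (by omega : 0 < A.card)
    set b1 := m a1 ha1 with hb1def
    have hb1 : b1 ∈ Aᶜ := hmB' a1 ha1
    obtain ⟨b2, hb2, hb2ne⟩ := Finset.exists_mem_ne (by omega : 1 < Aᶜ.card) b1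
    set a2 := w b2 hb2 with ha2def
    have ha2 : a2 ∈ A := hwA b2 hb2
    have ha12 : a2 ≠ a1 := by
      intro h
      have : b2 = m a1 ha1 := huniqA a1 ha1 b2 (h ▸ (hwadj b2 hb2).symm)
        (Finset.mem_compl.mp hb2)
      exact hb2ne (this.trans hb1def.symm)
    have hcard3 : 1 ≤ ((A.erase a1).erase a2).card := by
      have e1 : (A.erase a1).card = A.card - 1 := Finset.card_erase_of_mem ha1
      have e2 : ((A.erase a1).erase a2).card = (A.erase a1).card - 1 :=
        Finset.card_erase_of_mem (Finset.mem_erase.mpr ⟨ha12, ha2⟩)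
      omega
    obtain ⟨a3, ha3⟩ := Finset.card_pos.mp hcard3
    have ha3A : a3 ∈ A := Finset.mem_of_mem_erase (Finset.mem_of_mem_erase ha3)
    have ha31 : a3 ≠ a1 := (Finset.mem_erase.mp (Finset.mem_of_mem_erase ha3)).1
    have ha32 : a3 ≠ a2 := (Finset.mem_erase.mp ha3).1
    -- P4 : a3 - a1 - b1 - b2
    have hab : G.Adj a3 a1 := hclqA a3 a1 ha3A ha1 ha31
    have hbc : G.Adj a1 b1 := hmadj a1 ha1
    have hcd : G.Adj b1 b2 := hclqB b1 b2 hb1 hb2 (fun h => hb2ne h.symm)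
    have hac : ¬ G.Adj a3 b1 := by
      intro h
      have h5 : a3 = w b1 hb1 := huniqB b1 hb1 a3 h.symm (by simp [ha3A])
      exact ha31 (h5.trans (hwm a1 ha1))
    have had : ¬ G.Adj a3 b2 := by
      intro h
      have : a3 = w b2 hb2 := huniqB b2 hb2 a3 h.symm (by simp [ha3A])
      exact ha32 this
    have hbd : ¬ G.Adj a1 b2 := by
      intro h
      have : b2 = m a1 ha1 := huniqA a1 ha1 b2 h (Finset.mem_compl.mp hb2)
      exact hb2ne (this.trans hb1def.symm)
    obtain ⟨emb⟩ := mkP4 hab hbc hcd hac had hbd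
    exact hG.false emb
  · -- δ = 2 : G is a 4-cycle
    have hδ2 : δ = 2 := by omega
    obtain ⟨a1, a2, ha12, hAeq⟩ := Finset.card_eq_two.mp (by omega : A.card = 2)
    have ha1 : a1 ∈ A := by rw [hAeq]; simp
    have ha2 : a2 ∈ A := by rw [hAeq]; simp
    set b1 := m a1 ha1 with hb1def
    set b2 := m a2 ha2 with hb2def
    have hb1 : b1 ∈ Aᶜ := hmB' a1 ha1
    have hb2 : b2 ∈ Aᶜ := hmB' a2 ha2
    have hb12 : b1 ≠ b2 := by
      have e1 : w b1 hb1 = a1 := hwm a1 ha1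
      have e2 : w b2 hb2 = a2 := hwm a2 ha2
      clear_value b1 b2
      intro h
      subst h
      have e3 : w b1 hb1 = w b1 hb2 := rfl
      exact ha12 (e1.symm.trans (e3.trans e2))
    -- adjacency facts
    have hA12 : G.Adj a1 a2 := hclqA a1 a2 ha1 ha2 ha12
    have hB12 : G.Adj b1 b2 := hclqB b1 b2 hb1 hb2 hb12
    have h11 : G.Adj a1 b1 := hmadj a1 ha1
    have h22 : G.Adj a2 b2 := hmadj a2 ha2
    have h12 : ¬ G.Adj a1 b2 := by
      intro h
      exact hb12 ((huniqA a1 ha1 b2 h (Finset.mem_compl.mp hb2)).trans hb1def.symm).symm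
    have h21 : ¬ G.Adj a2 b1 := by
      intro h
      exact hb12 ((huniqA a2 ha2 b1 h (Finset.mem_compl.mp hb1)).trans hb2def.symm)
    have hVcard : Fintype.card V = 4 := by
      have h := Finset.card_add_card_compl A
      omega
    have hab1 : a1 ≠ b1 := fun h => (Finset.mem_compl.mp hb1) (h ▸ ha1)
    have hab2 : a1 ≠ b2 := fun h => (Finset.mem_compl.mp hb2) (h ▸ ha1)
    have hab3 : a2 ≠ b1 := fun h => (Finset.mem_compl.mp hb1) (h ▸ ha2)
    have hab4 : a2 ≠ b2 := fun h => (Finset.mem_compl.mp hb2) (h ▸ ha2)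
    exact hC4 (buildC4 hVcard ha12 hb12 hab1 hab2 hab3 hab4 hA12 hB12 h11 h22 h12 h21)


lemma star_case {A : Finset V} {a : V} (hAa : A = {a})
    (hxcard : (xF G A).ncard = minDeg G) :
    xF G A = G.incidenceSet a ∧ (G.neighborSet a).ncard = minDeg G := by
  have hset : xF G A = G.incidenceSet a := by
    ext e
    constructor
    · rintro ⟨x, y, hx, hy, hadj, rfl⟩
      rw [hAa, Finset.mem_singleton] at hx
      subst hx
      exact G.mk'_mem_incidenceSet_left_iff.mpr hadj
    · intro he
      induction e with
      | _ x y =>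
        obtain ⟨hadj, hor⟩ := (G.mk'_mem_incidenceSet_iff).mp he
        rcases hor with rfl | rfl
        · exact ⟨a, y, by simp [hAa], by simp [hAa, (G.ne_of_adj hadj).symm], hadj, rfl⟩
        · exact ⟨a, x, by simp [hAa], by simp [hAa, G.ne_of_adj hadj], hadj.symm, Sym2.eq_swap⟩
  refine ⟨hset, ?_⟩
  rw [ncard_neighborSet_eq_degree, ← ncard_incidenceSet (G := G) a, ← hset, hxcard]

end Aux

/-- Every maximally connected cograph that is not a 4-cycle is super
edge-connected. -/
theorem stmt16 {V : Type*} [Fintype V] (G : SimpleGraph V) (hG : IsCograph G)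
    (hconn : G.Connected) (hmax : vConn G = minDeg G)
    (hC4 : ¬ Nonempty (G ≃g (SimpleGraph.cycleGraph 4))) :
    SuperEdgeConnected G := by
  classical
  have hG' : IsEmpty (SimpleGraph.pathGraph 4 ↪g G) := hG
  refine ⟨hconn, ?_⟩
  intro F hFsub hFdis hFcard
  have hne : Nonempty V := hconn.nonempty
  by_cases hcard : Fintype.card V ≤ 1
  · exfalso
    apply hFdis
    have hsub : Subsingleton V := Fintype.card_le_one_iff_subsingleton.mp hcard
    exact ⟨fun u v => by rw [Subsingleton.elim u v]⟩
  push_neg at hcard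
  have hE : eConn G = minDeg G := eConn_eq hG' hconn hcard
  rw [hE] at hFcard
  obtain ⟨A, hA, hA', hxf⟩ := exists_cross_part hFdis
  have hple : minDeg G ≤ (xF G A).ncard := plesnik hG' hconn hA hA'
  have hle : (xF G A).ncard ≤ F.ncard := Set.ncard_le_ncard hxf (Set.toFinite F)
  have hFx : xF G A = F :=
    Set.eq_of_subset_of_ncard_le hxf (by omega) (Set.toFinite F)
  have hxcard : (xF G A).ncard = minDeg G := by rw [hFx, hFcard]
  by_cases hA1 : A.card = 1
  · obtain ⟨a, ha⟩ := Finset.card_eq_one.mp hA1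
    obtain ⟨h1, h2⟩ := star_case ha hxcard
    exact ⟨a, by rw [← hFx, h1], h2⟩
  by_cases hB1 : Aᶜ.card = 1
  · obtain ⟨a, ha⟩ := Finset.card_eq_one.mp hB1
    have hxcard' : (xF G Aᶜ).ncard = minDeg G := by rw [xF_compl]; exact hxcard
    obtain ⟨h1, h2⟩ := star_case ha hxcard'
    exact ⟨a, by rw [← hFx, ← xF_compl, h1], h2⟩
  exfalso
  have h2A : 2 ≤ A.card := by
    have := hA.card_pos; omega
  have h2B : 2 ≤ Aᶜ.card := by
    have := hA'.card_pos; omega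
  by_cases hall1 : ∀ a ∈ A, 1 ≤ (G.neighborFinset a \ A).card
  · by_cases hall2 : ∀ b ∈ Aᶜ, 1 ≤ (G.neighborFinset b \ Aᶜ).card
    · exact core3 hG' hC4 h2A h2B hall1 hall2 hxcard
    · push_neg at hall2
      obtain ⟨b0, hb0, hb00⟩ := hall2
      rw [Nat.lt_one_iff] at hb00
      refine core2 hG' hconn hmax hb0 hb00 ?_ ?_
      · rw [compl_compl]; exact h2A
      · rw [xF_compl]; exact hxcard
  · push_neg at hall1
    obtain ⟨a0, ha0, ha00⟩ := hall1
    rw [Nat.lt_one_iff] at ha00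
    exact core2 hG' hconn hmax ha0 ha00 h2B hxcard
end
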